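/- arXiv:math/0311193 — 5 statements merged into one kernel-verified Lean document; each statement's English description precedes it below -/
import Mathlib

section
/- There exists C > 0 such that for every n ≥ 1 and every ω ∈ S¹, one has 1/(C·n^{1/α_min}) ≤ X_n(ω) ≤ C/n^{1/α_max}. -/
set_option maxHeartbeats 1000000

open MeasureTheory Real Filter Topology
open scoped NNReal ENNReal

noncomputable section

/-- The circle `S¹ = ℝ/ℤ`. -/
abbrev S1 : Type := UnitAddCircle

/-- The map `F(ω) = 4ω` on the circle. -/
noncomputable def Fm : S1 → S1 := fun ω => (4 : ℕ) • ω

/-- The one-dimensional maps `T_a(x) = x(1 + 2^a x^a) = x(1 + (2x)^a)` for `x ≤ 1/2`,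
`2x - 1` for `x > 1/2`. -/
noncomputable def Ta (a x : ℝ) : ℝ := if x ≤ 1 / 2 then x * (1 + (2 * x) ^ a) else 2 * x - 1

/-- The skew product `T(ω, x) = (F ω, T_{α(ω)}(x))`. -/
noncomputable def Tskew (α : S1 → ℝ) : S1 × ℝ → S1 × ℝ :=
  fun p => (Fm p.1, Ta (α p.1) p.2)

/-- The reference measure: Haar probability on `S¹` times Lebesgue measure on `[0,1]`. -/
noncomputable def Leb : Measure (S1 × ℝ) :=
  (volume : Measure S1).prod (volume.restrict (Set.Icc (0:ℝ) 1))

/-- Growth estimate: `(1+1/n)^s ≤ 1 + 2 s e^s/(n+1)` for `s ≥ 1`, `n ≥ 1`. -/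
lemma aux_exp_growth (s : ℝ) (hs : 1 ≤ s) (n : ℕ) (hn : 1 ≤ n) :
    ((1:ℝ) + 1/(n:ℝ)) ^ s ≤ 1 + (2*s*Real.exp s)/((n:ℝ)+1) := by
  have hn0 : (0:ℝ) < n := by exact_mod_cast hn
  have hs0 : 0 < s := lt_of_lt_of_le one_pos hs
  have h1 : (1:ℝ) + 1/(n:ℝ) ≤ Real.exp (1/(n:ℝ)) := by
    have := Real.add_one_le_exp (1/(n:ℝ)); linarith
  have h2 : ((1:ℝ) + 1/(n:ℝ)) ^ s ≤ (Real.exp (1/(n:ℝ))) ^ s :=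
    Real.rpow_le_rpow (by positivity) h1 hs0.le
  have h3 : (Real.exp (1/(n:ℝ))) ^ s = Real.exp (s/(n:ℝ)) := by
    rw [← Real.exp_mul]; ring_nf
  have h4 : Real.exp (s/(n:ℝ)) ≤ 1 + (s/(n:ℝ)) * Real.exp (s/(n:ℝ)) := by
    have h := Real.add_one_le_exp (-(s/(n:ℝ)))
    rw [Real.exp_neg] at h
    have hp := Real.exp_pos (s/(n:ℝ))
    nlinarith [mul_le_mul_of_nonneg_right h hp.le, mul_inv_cancel₀ hp.ne']
  have h5 : Real.exp (s/(n:ℝ)) ≤ Real.exp s := by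
    apply Real.exp_le_exp.2
    rw [div_le_iff₀ hn0]
    have hn1 : (1:ℝ) ≤ (n:ℝ) := by exact_mod_cast hn
    nlinarith
  have h6 : (s/(n:ℝ)) * Real.exp (s/(n:ℝ)) ≤ (2*s*Real.exp s)/((n:ℝ)+1) := by
    have hq : s/(n:ℝ) ≤ 2*s/((n:ℝ)+1) := by
      rw [div_le_div_iff₀ hn0 (by linarith)]
      have hn1 : (1:ℝ) ≤ (n:ℝ) := by exact_mod_cast hn
      nlinarith
    calc (s/(n:ℝ)) * Real.exp (s/(n:ℝ)) ≤ (s/(n:ℝ)) * Real.exp s := by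
          apply mul_le_mul_of_nonneg_left h5 (by positivity)
      _ ≤ (2*s/((n:ℝ)+1)) * Real.exp s := by
          apply mul_le_mul_of_nonneg_right hq (Real.exp_pos s).le
      _ = (2*s*Real.exp s)/((n:ℝ)+1) := by ring
  calc ((1:ℝ) + 1/(n:ℝ)) ^ s ≤ Real.exp (s/(n:ℝ)) := h3 ▸ h2
    _ ≤ 1 + (s/(n:ℝ)) * Real.exp (s/(n:ℝ)) := h4
    _ ≤ 1 + (2*s*Real.exp s)/((n:ℝ)+1) := by linarith [h6]

/-- Splitting identity: `n^{-s} = (n+1)^{-s} (1+1/n)^s`. -/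
lemma aux_split (n : ℕ) (hn : 1 ≤ n) (s : ℝ) :
    ((n:ℝ))^(-s) = ((n:ℝ)+1)^(-s) * ((1:ℝ) + 1/(n:ℝ))^s := by
  have hn0 : (0:ℝ) < n := by exact_mod_cast hn
  rw [show (1:ℝ) + 1/(n:ℝ) = ((n:ℝ)+1)/(n:ℝ) by field_simp]
  rw [Real.div_rpow (by positivity) hn0.le, Real.rpow_neg hn0.le,
    Real.rpow_neg (by positivity : (0:ℝ) ≤ (n:ℝ)+1)]
  have h1 : ((n:ℝ)+1)^s ≠ 0 := by positivity
  field_simp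

/-- Power computation: `(2 c (n+1)^{-1/a})^a = (2c)^a / (n+1)`. -/
lemma aux_pow (a c : ℝ) (ha : 0 < a) (hc : 0 ≤ c) (n : ℕ) :
    (2*(c * ((n:ℝ)+1)^(-(1/a))))^a = (2*c)^a * ((n:ℝ)+1)⁻¹ := by
  have hn1 : (0:ℝ) < (n:ℝ)+1 := by positivity
  rw [show 2*(c * ((n:ℝ)+1)^(-(1/a))) = (2*c) * ((n:ℝ)+1)^(-(1/a)) by ring]
  rw [Real.mul_rpow (by positivity) (by positivity)]
  rw [← Real.rpow_mul hn1.le]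
  rw [show (-(1/a))*a = -1 by field_simp]
  rw [Real.rpow_neg_one]

/-- There exists `C > 0` such that `1/(C n^{1/α_min}) ≤ X_n(ω) ≤ C / n^{1/α_max}` for every
`n ≥ 1` and `ω ∈ S¹`. -/
theorem stmt5
    (α : S1 → ℝ) (αl : ℝ → ℝ)
    (hαl : ContDiff ℝ 2 αl) (hlift : ∀ t : ℝ, α (t : S1) = αl t)
    (x₀ : S1) (t₀ : ℝ) (ht₀ : (t₀ : S1) = x₀)
    (αmin αmax : ℝ)
    (hmin : ∀ ω, αmin ≤ α ω) (hx₀ : α x₀ = αmin)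
    (huniq : ∀ ω, α ω = αmin → ω = x₀)
    (hmax : ∀ ω, α ω ≤ αmax) (hmax_att : ∃ ω, α ω = αmax)
    (h0 : 0 < αmin) (h01 : αmin < αmax) (h1 : αmax < 1) (h32 : αmax < 3 / 2 * αmin)
    (h2nd : 0 < iteratedDeriv 2 αl t₀)
    (X : ℕ → S1 → ℝ)
    (hX0 : ∀ ω, X 0 ω = 1) (hX1 : ∀ ω, X 1 ω = 1 / 2)
    (hXmem : ∀ n, 1 ≤ n → ∀ ω, X (n + 1) ω ∈ Set.Icc (0:ℝ) (1 / 2))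
    (hXrec : ∀ n, 1 ≤ n → ∀ ω, Ta (α ω) (X (n + 1) ω) = X n (Fm ω))
 :
    ∃ C : ℝ, 0 < C ∧ ∀ n : ℕ, 1 ≤ n → ∀ ω : S1,
      1 / (C * (n : ℝ) ^ (1 / αmin)) ≤ X n ω ∧ X n ω ≤ C / (n : ℝ) ^ (1 / αmax) := by
  have hαmax0 : 0 < αmax := h0.trans h01
  set s : ℝ := 1 / αmax with hsdef
  set s' : ℝ := 1 / αmin with hs'def
  have hs1 : 1 ≤ s := by
    rw [hsdef, le_div_iff₀ hαmax0]; linarith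
  have hs'1 : 1 ≤ s' := by
    rw [hs'def, le_div_iff₀ h0]; linarith
  set M : ℝ := 2 * s * Real.exp s with hMdef
  have hM0 : 0 < M := by
    have := Real.exp_pos s; rw [hMdef]; nlinarith
  set B : ℝ := max (1/2) ((1/2) * M ^ s) with hBdef
  have hB : (1/2:ℝ) ≤ B := le_max_left _ _
  have hB0 : 0 < B := lt_of_lt_of_le (by norm_num) hB
  have hBM : M ≤ (2*B)^αmax := by
    have h2B : M ^ s ≤ 2 * B := by
      have : (1/2) * M ^ s ≤ B := le_max_right _ _
      linarith
    have h2 : (M ^ s) ^ αmax ≤ (2*B)^αmax :=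
      Real.rpow_le_rpow (Real.rpow_nonneg hM0.le s) h2B hαmax0.le
    have h3 : (M ^ s) ^ αmax = M := by
      rw [← Real.rpow_mul hM0.le, hsdef, one_div_mul_cancel hαmax0.ne', Real.rpow_one]
    linarith [h3 ▸ h2]
  -- Upper bound by induction
  have upper : ∀ n, 1 ≤ n → ∀ ω, X n ω ≤ B * (n:ℝ) ^ (-s) := by
    intro n hn
    induction n, hn using Nat.le_induction with
    | base =>
      intro ω
      rw [hX1 ω]
      simp only [Nat.cast_one, Real.one_rpow]
      linarith
    | succ n hn IH =>
      intro ω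
      by_contra hcon
      push_neg at hcon
      push_cast at hcon
      set x := X (n+1) ω with hxdef
      obtain ⟨hx0, hx2⟩ := hXmem n hn ω
      set b : ℝ := B * ((n:ℝ)+1)^(-s) with hbdef
      have hb0 : 0 < b := by
        have : (0:ℝ) < ((n:ℝ)+1)^(-s) := Real.rpow_pos_of_pos (by positivity) _
        positivity
      have hrec := hXrec n hn ω
      rw [Ta, if_pos hx2] at hrec
      have hup := IH (Fm ω)
      have hx_pos : 0 < x := lt_trans hb0 hcon
      have h2x1 : 2*x ≤ 1 := by linarith
      have e1 : x * (1 + (2*x)^αmax) ≤ x * (1 + (2*x)^(α ω)) := by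
        have h := Real.rpow_le_rpow_of_exponent_ge (by linarith : (0:ℝ) < 2*x) h2x1 (hmax ω)
        exact mul_le_mul_of_nonneg_left (by linarith) hx0
      have e2 : b * (1 + (2*b)^αmax) < x * (1 + (2*x)^αmax) := by
        have hbx : (2*b)^αmax ≤ (2*x)^αmax :=
          Real.rpow_le_rpow (by positivity) (by linarith) hαmax0.le
        have hpos : (0:ℝ) < 1 + (2*b)^αmax := by positivity
        calc b * (1 + (2*b)^αmax) < x * (1 + (2*b)^αmax) :=
              mul_lt_mul_of_pos_right hcon hpos
          _ ≤ x * (1 + (2*x)^αmax) := mul_le_mul_of_nonneg_left (by linarith) hx0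
      have e3 : B * (n:ℝ)^(-s) ≤ b * (1 + (2*b)^αmax) := by
        have hpow : (2*b)^αmax = (2*B)^αmax * ((n:ℝ)+1)⁻¹ := by
          rw [hbdef, hsdef]
          exact aux_pow αmax B hαmax0 hB0.le n
        have hMb : M * ((n:ℝ)+1)⁻¹ ≤ (2*b)^αmax := by
          rw [hpow]
          exact mul_le_mul_of_nonneg_right hBM (by positivity)
        have key : (n:ℝ)^(-s) ≤ ((n:ℝ)+1)^(-s) * (1 + M/((n:ℝ)+1)) := by
          rw [aux_split n hn s]
          have hg := aux_exp_growth s hs1 n hn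
          rw [← hMdef] at hg
          exact mul_le_mul_of_nonneg_left hg (Real.rpow_nonneg (by positivity) _)
        calc B * (n:ℝ)^(-s) ≤ B * (((n:ℝ)+1)^(-s) * (1 + M/((n:ℝ)+1))) :=
              mul_le_mul_of_nonneg_left key hB0.le
          _ = b * (1 + M * ((n:ℝ)+1)⁻¹) := by rw [hbdef]; ring
          _ ≤ b * (1 + (2*b)^αmax) := mul_le_mul_of_nonneg_left (by linarith) hb0.le
      have hfin := e3.trans_lt (e2.trans_le e1)
      rw [hrec] at hfin
      linarith
  -- Lower bound by induction
  have lower : ∀ n : ℕ, 1 ≤ n → ∀ ω, (1/2) * (n:ℝ) ^ (-s') ≤ X n ω := by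
    intro n hn
    induction n, hn using Nat.le_induction with
    | base =>
      intro ω
      rw [hX1 ω]
      simp only [Nat.cast_one]
      rw [Real.one_rpow]
      linarith
    | succ n hn IH =>
      intro ω
      by_contra hcon
      push_neg at hcon
      push_cast at hcon
      set x := X (n+1) ω with hxdef
      obtain ⟨hx0, hx2⟩ := hXmem n hn ω
      set b : ℝ := (1/2) * ((n:ℝ)+1)^(-s') with hbdef
      have hnpos : (0:ℝ) < (n:ℝ) := by exact_mod_cast hn
      have hnlow : (0:ℝ) < (n:ℝ)^(-s') := Real.rpow_pos_of_pos hnpos _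
      have hrec := hXrec n hn ω
      rw [Ta, if_pos hx2] at hrec
      have hlow := IH (Fm ω)
      rcases eq_or_lt_of_le hx0 with hxz | hx_pos
      · rw [← hrec, ← hxz] at hlow
        simp at hlow
        nlinarith
      · have h2x1 : 2*x ≤ 1 := by linarith
        have e1 : x * (1 + (2*x)^(α ω)) ≤ x * (1 + (2*x)^αmin) := by
          have h := Real.rpow_le_rpow_of_exponent_ge (by linarith : (0:ℝ) < 2*x) h2x1 (hmin ω)
          exact mul_le_mul_of_nonneg_left (by linarith) hx0
        have e2 : x * (1 + (2*x)^αmin) < b * (1 + (2*b)^αmin) := by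
          have hbx : (2*x)^αmin ≤ (2*b)^αmin :=
            Real.rpow_le_rpow (by positivity) (by linarith) h0.le
          have hpos : (0:ℝ) < 1 + (2*b)^αmin := by positivity
          calc x * (1 + (2*x)^αmin) ≤ x * (1 + (2*b)^αmin) :=
              mul_le_mul_of_nonneg_left (by linarith) hx0
            _ < b * (1 + (2*b)^αmin) := mul_lt_mul_of_pos_right hcon hpos
        have e3 : b * (1 + (2*b)^αmin) ≤ (1/2) * (n:ℝ)^(-s') := by
          have hpow : (2*b)^αmin = ((n:ℝ)+1)⁻¹ := by
            rw [hbdef, hs'def]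
            have := aux_pow αmin (1/2) h0 (by norm_num) n
            rw [this]
            norm_num
          have key : ((n:ℝ)+1)^(-s') * (1 + ((n:ℝ)+1)⁻¹) ≤ (n:ℝ)^(-s') := by
            rw [aux_split n hn s']
            have hb1 : (1:ℝ) + ((n:ℝ)+1)⁻¹ ≤ ((1:ℝ) + 1/(n:ℝ))^s' := by
              have hineq : (1:ℝ) + ((n:ℝ)+1)⁻¹ ≤ 1 + 1/(n:ℝ) := by
                have : ((n:ℝ)+1)⁻¹ ≤ 1/(n:ℝ) := by
                  rw [one_div]
                  exact inv_anti₀ hnpos (by linarith)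
                linarith
              have h1n : (1:ℝ) ≤ 1 + 1/(n:ℝ) := by
                have : (0:ℝ) < 1/(n:ℝ) := by positivity
                linarith
              calc (1:ℝ) + ((n:ℝ)+1)⁻¹ ≤ 1 + 1/(n:ℝ) := hineq
                _ = ((1:ℝ) + 1/(n:ℝ))^(1:ℝ) := (Real.rpow_one _).symm
                _ ≤ ((1:ℝ) + 1/(n:ℝ))^s' := Real.rpow_le_rpow_of_exponent_le h1n hs'1
            exact mul_le_mul_of_nonneg_left hb1 (Real.rpow_nonneg (by positivity) _)
          calc b * (1 + (2*b)^αmin) = (1/2) * (((n:ℝ)+1)^(-s') * (1 + ((n:ℝ)+1)⁻¹)) := by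
                rw [hpow, hbdef]; ring
            _ ≤ (1/2) * (n:ℝ)^(-s') := by linarith
        rw [hrec] at e1
        linarith [hlow, e1, e2, e3]
  -- Conclusion
  refine ⟨max 2 B, lt_of_lt_of_le (by norm_num) (le_max_left _ _), ?_⟩
  intro n hn ω
  set C : ℝ := max 2 B with hCdef
  have hC2 : (2:ℝ) ≤ C := le_max_left _ _
  have hCB : B ≤ C := le_max_right _ _
  have hnpos : (0:ℝ) < (n:ℝ) := by exact_mod_cast hn
  have hps' : (0:ℝ) < (n:ℝ)^s' := Real.rpow_pos_of_pos hnpos _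
  have hps : (0:ℝ) < (n:ℝ)^s := Real.rpow_pos_of_pos hnpos _
  constructor
  · have hL := lower n hn ω
    have hneg : (n:ℝ)^(-s') = ((n:ℝ)^s')⁻¹ := Real.rpow_neg hnpos.le _
    rw [hneg] at hL
    have hstep : 1 / (C * (n:ℝ)^s') ≤ 1 / (2 * (n:ℝ)^s') :=
      one_div_le_one_div_of_le (by positivity) (by nlinarith)
    have heq : 1 / (2 * (n:ℝ)^s') = (1/2) * ((n:ℝ)^s')⁻¹ := by
      rw [one_div, mul_inv]; ring
    linarith [heq ▸ hstep]
  · have hU := upper n hn ω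
    have hneg : (n:ℝ)^(-s) = ((n:ℝ)^s)⁻¹ := Real.rpow_neg hnpos.le _
    rw [hneg] at hU
    have : B * ((n:ℝ)^s)⁻¹ ≤ C / (n:ℝ)^s := by
      rw [div_eq_mul_inv]
      exact mul_le_mul_of_nonneg_right hCB (by positivity)
    linarith
end
end

section
/- There exists D > 0 such that the following holds: for every subinterval K of S¹ of length |K| < 1/4 and every C¹ map ψ : K → [0,1] with |ψ'(ω)| ≤ D for all ω ∈ K, whose graph is contained either in K × [0,1/2] or in K × (1/2,1], the image by T of the graph of ψ is the graph of a C¹ map ψ̃ : F(K) → [0,1] with |ψ̃'| ≤ D everywhere. -/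
/-!
Along the graph of `ψ`, the left branch gives `t ↦ ψ (1 + (2ψ)^α)`, whose derivative is
`ψ' (1 + (2ψ)^α) + (2ψ)^α (α ψ' + ψ log (2ψ) α')`. As `(2ψ)^α ≤ 1`, `α ≤ 1` and `|y log y| ≤ 1`
on `[0, 1]`, it is bounded by `3|ψ'| + |α'|/2`, while the right branch just doubles `ψ'`. So if `D`
bounds both `|ψ'|` and `|α'|`, the image curve has slope at most `4D` in `t`, and reparametrising
by `s = 4t` (the expansion of `F`) brings it back to `D`. Where `ψ = 0` the power rule for a
variable exponent does not apply; there the derivative comes from `ψ` vanishing and `(2ψ)^α`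
being continuous, as `α > 0`.
-/

open MeasureTheory Real Filter Topology
open scoped NNReal ENNReal

noncomputable section

open Set

theorem Function.Periodic.exists_pos_abs_deriv_le {f : ℝ → ℝ} {c : ℝ} (hp : Function.Periodic f c)
    (hc : c ≠ 0) (hf : ContDiff ℝ 1 f) : ∃ C > 0, ∀ t, |deriv f t| ≤ C := by
  have hp' : Function.Periodic (deriv f) c := fun t => by rw [← deriv_comp_add_const, hp.funext]
  obtain ⟨C, hC, hbound⟩ :=
    (hp'.isBounded_of_continuous hc (hf.continuous_deriv le_rfl)).exists_pos_norm_le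
  exact ⟨C, hC, fun t => hbound _ (mem_range_self t)⟩

theorem HasDerivWithinAt.mul_of_eq_zero {v g : ℝ → ℝ} {v' x : ℝ} {s : Set ℝ}
    (hv : HasDerivWithinAt v v' s x) (hv0 : v x = 0) (hg : ContinuousWithinAt g s x) :
    HasDerivWithinAt (fun y => v y * g y) (v' * g x) s x := by
  rw [hasDerivWithinAt_iff_tendsto_slope] at hv ⊢
  have hslope : slope (fun y => v y * g y) x = fun y => slope v x y * g y := by
    ext y
    simp only [slope_def_field, hv0, zero_mul, sub_zero]
    ring
  rw [hslope]
  exact hv.mul (hg.tendsto.mono_left (nhdsWithin_mono _ sdiff_subset))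

theorem mapsTo_div_const_Icc {a b c : ℝ} (hc : 0 < c) :
    MapsTo (· / c) (Icc (c * a) (c * b)) (Icc a b) := fun _ hs =>
  ⟨(le_div_iff₀' hc).2 hs.1, (div_le_iff₀' hc).2 hs.2⟩

theorem hasDerivWithinAt_comp_div_const_Icc {f f' : ℝ → ℝ} {a b c : ℝ} (hc : 0 < c)
    (hf : ∀ t ∈ Icc a b, HasDerivWithinAt f (f' t) (Icc a b) t) :
    ∀ s ∈ Icc (c * a) (c * b),
      HasDerivWithinAt (fun s => f (s / c)) (f' (s / c) / c) (Icc (c * a) (c * b)) s := by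
  intro s hs
  have := (hf _ (mapsTo_div_const_Icc hc hs)).comp s
    ((hasDerivWithinAt_id s _).div_const c) (mapsTo_div_const_Icc hc)
  simpa [Function.comp_def, div_eq_mul_inv] using this

theorem contDiffOn_Icc_of_hasDerivWithinAt {f f' : ℝ → ℝ} {a b : ℝ} (hab : a ≤ b)
    (hf : ∀ t ∈ Icc a b, HasDerivWithinAt f (f' t) (Icc a b) t)
    (hf' : ContinuousOn f' (Icc a b)) : ContDiffOn ℝ 1 f (Icc a b) := by
  rcases hab.eq_or_lt with rfl | hab
  · rw [Icc_self]
    exact (contDiffOn_const (c := f a)).congr fun t ht => by rw [mem_singleton_iff.1 ht]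
  · have hu := uniqueDiffOn_Icc hab
    rw [contDiffOn_one_iff_derivWithin hu]
    exact ⟨fun t ht => (hf t ht).differentiableWithinAt,
      hf'.congr fun t ht => (hf t ht).derivWithin (hu t ht)⟩

theorem ContDiffOn.continuousOn_derivWithin_Icc {f : ℝ → ℝ} {a b : ℝ} (hab : a ≤ b)
    (hf : ContDiffOn ℝ 1 f (Icc a b)) : ContinuousOn (derivWithin f (Icc a b)) (Icc a b) := by
  rcases hab.eq_or_lt with rfl | hab
  · rw [Icc_self]
    exact continuousOn_singleton _ _
  · exact hf.continuousOn_derivWithin (uniqueDiffOn_Icc hab) le_rfl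

theorem abs_derivWithin_le_of_hasDerivWithinAt {f : ℝ → ℝ} {f' C t : ℝ} {s : Set ℝ}
    (hf : HasDerivWithinAt f f' s t) (hC : |f'| ≤ C) : |derivWithin f s t| ≤ C := by
  by_cases h : UniqueDiffWithinAt ℝ s t
  · rwa [hf.derivWithin h]
  · rw [derivWithin_zero_of_not_uniqueDiffWithinAt h, abs_zero]
    exact (abs_nonneg _).trans hC

def leftBranchDeriv (x a x' a' : ℝ) : ℝ :=
  x' * (1 + (2 * x) ^ a) + (2 * x) ^ a * (a * x' + x * log (2 * x) * a')

theorem HasDerivWithinAt.mul_one_add_two_mul_rpow {x a : ℝ → ℝ} {x' a' t : ℝ} {s : Set ℝ}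
    (hx : HasDerivWithinAt x x' s t) (ha : HasDerivWithinAt a a' s t) (hx0 : 0 ≤ x t)
    (ha0 : 0 < a t) :
    HasDerivWithinAt (fun t => x t * (1 + (2 * x t) ^ a t))
      (leftBranchDeriv (x t) (a t) x' a') s t := by
  rcases hx0.eq_or_lt with hx0 | hx0
  · have hcont : ContinuousWithinAt (fun t => 1 + (2 * x t) ^ a t) s t :=
      continuousWithinAt_const.add
        ((continuousWithinAt_const.mul hx.continuousWithinAt).rpow ha.continuousWithinAt
          (Or.inr ha0))
    refine (hx.mul_of_eq_zero hx0.symm hcont).congr_deriv ?_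
    simp [leftBranchDeriv, ← hx0, zero_rpow ha0.ne']
  · have h2x : 0 < 2 * x t := by positivity
    refine (hx.mul (((hx.const_mul 2).rpow ha h2x).const_add 1)).congr_deriv ?_
    rw [leftBranchDeriv, rpow_sub h2x, rpow_one]
    field_simp

theorem abs_leftBranchDeriv_le {x a x' a' : ℝ} (hx : x ∈ Icc 0 (1 / 2)) (ha : a ∈ Ioc 0 1) :
    |leftBranchDeriv x a x' a'| ≤ 3 * |x'| + |a'| / 2 := by
  obtain ⟨hx0, hx1⟩ := hx
  obtain ⟨ha0, ha1⟩ := ha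
  have hp0 : 0 ≤ (2 * x) ^ a := rpow_nonneg (by linarith) a
  have hp1 : (2 * x) ^ a ≤ 1 := rpow_le_one (by linarith) (by linarith) ha0.le
  have hlog : |x * log (2 * x)| ≤ 1 / 2 := by
    rcases hx0.eq_or_lt with rfl | hx0
    · simp
    · have := abs_log_mul_self_lt (2 * x) (by linarith) (by linarith)
      rw [abs_mul, abs_of_pos (by linarith : (0:ℝ) < 2 * x)] at this
      rw [abs_mul, abs_of_pos hx0]
      linarith
  have hinner : |a * x' + x * log (2 * x) * a'| ≤ |x'| + |a'| / 2 := calc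
    _ ≤ a * |x'| + |x * log (2 * x)| * |a'| := by
      simpa [abs_mul, abs_of_pos ha0] using abs_add_le (a * x') (x * log (2 * x) * a')
    _ ≤ 1 * |x'| + 1 / 2 * |a'| := by gcongr
    _ = |x'| + |a'| / 2 := by ring
  calc |leftBranchDeriv x a x' a'|
      ≤ |x'| * (1 + (2 * x) ^ a) + (2 * x) ^ a * |a * x' + x * log (2 * x) * a'| := by
        have h1p : 0 ≤ 1 + (2 * x) ^ a := by linarith
        simpa [leftBranchDeriv, abs_mul, abs_of_nonneg hp0, abs_of_nonneg h1p] using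
          abs_add_le (x' * (1 + (2 * x) ^ a)) ((2 * x) ^ a * (a * x' + x * log (2 * x) * a'))
    _ ≤ |x'| * (1 + 1) + 1 * (|x'| + |a'| / 2) := by gcongr
    _ = 3 * |x'| + |a'| / 2 := by ring

theorem Ta_mem_Icc {a x : ℝ} (ha : 0 ≤ a) (hx : x ∈ Icc 0 1) : Ta a x ∈ Icc 0 1 := by
  obtain ⟨hx0, hx1⟩ := hx
  unfold Ta
  split_ifs with h
  · have hp0 : 0 ≤ (2 * x) ^ a := rpow_nonneg (by linarith) a
    have hp1 : (2 * x) ^ a ≤ 1 := rpow_le_one (by linarith) (by linarith) ha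
    constructor <;> nlinarith
  · constructor <;> linarith

theorem exists_hasDerivWithinAt_Ta_comp {s : Set ℝ} {x a x' a' : ℝ → ℝ} {C : ℝ}
    (hx : ∀ t ∈ s, HasDerivWithinAt x (x' t) s t) (ha : ∀ t ∈ s, HasDerivWithinAt a (a' t) s t)
    (hx'c : ContinuousOn x' s) (ha'c : ContinuousOn a' s)
    (hx01 : ∀ t ∈ s, x t ∈ Icc 0 1) (ha01 : ∀ t ∈ s, a t ∈ Ioc 0 1)
    (hx'C : ∀ t ∈ s, |x' t| ≤ C) (ha'C : ∀ t ∈ s, |a' t| ≤ C)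
    (hbranch : (∀ t ∈ s, x t ≤ 1 / 2) ∨ ∀ t ∈ s, 1 / 2 < x t) :
    ∃ φ' : ℝ → ℝ, (∀ t ∈ s, HasDerivWithinAt (fun t => Ta (a t) (x t)) (φ' t) s t) ∧
      ContinuousOn φ' s ∧ ∀ t ∈ s, |φ' t| ≤ 4 * C := by
  have hC : ∀ t ∈ s, 0 ≤ C := fun t ht => (abs_nonneg _).trans (hx'C t ht)
  have hxc : ContinuousOn x s := fun t ht => (hx t ht).continuousWithinAt
  have hac : ContinuousOn a s := fun t ht => (ha t ht).continuousWithinAt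
  rcases hbranch with hle | hgt
  · refine ⟨fun t => leftBranchDeriv (x t) (a t) (x' t) (a' t), fun t ht => ?_, ?_, fun t ht => ?_⟩
    · exact ((hx t ht).mul_one_add_two_mul_rpow (ha t ht) (hx01 t ht).1 (ha01 t ht).1).congr_of_mem
        (fun u hu => by rw [Ta, if_pos (hle u hu)]) ht
    · have h2x : ContinuousOn (fun t => 2 * x t) s := continuousOn_const.mul hxc
      have hpow : ContinuousOn (fun t => (2 * x t) ^ a t) s :=
        h2x.rpow hac fun t ht => Or.inr (ha01 t ht).1
      have hlog : ContinuousOn (fun t => x t * log (2 * x t)) s :=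
        ((continuous_mul_log.comp_continuousOn h2x).div_const 2).congr fun t _ => by
          simp only [Function.comp_apply]; ring
      exact (hx'c.mul (continuousOn_const.add hpow)).add
        (hpow.mul ((hac.mul hx'c).add (hlog.mul ha'c)))
    · have := abs_leftBranchDeriv_le (x' := x' t) (a' := a' t) ⟨(hx01 t ht).1, hle t ht⟩ (ha01 t ht)
      linarith [hx'C t ht, ha'C t ht, hC t ht]
  · refine ⟨fun t => 2 * x' t, fun t ht => ?_, continuousOn_const.mul hx'c, fun t ht => ?_⟩
    · exact ((hx t ht).const_mul 2).sub_const 1 |>.congr_of_mem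
        (fun u hu => by rw [Ta, if_neg (not_le.2 (hgt u hu))]) ht
    · rw [abs_mul, abs_two]
      linarith [hx'C t ht, hC t ht]

theorem stmt6_general
    (α : S1 → ℝ) (αl : ℝ → ℝ)
    (hαl : ContDiff ℝ 2 αl) (hlift : ∀ t : ℝ, α (t : S1) = αl t)
    (αmin αmax : ℝ)
    (hmin : ∀ ω, αmin ≤ α ω)
    (hmax : ∀ ω, α ω ≤ αmax)
    (h0 : 0 < αmin) (h1 : αmax < 1)
 :
    ∃ D : ℝ, 0 < D ∧ ∀ a b : ℝ, a ≤ b → b - a < 1 / 4 →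
      ∀ ψ : ℝ → ℝ, ContDiffOn ℝ 1 ψ (Set.Icc a b) →
        (∀ t ∈ Set.Icc a b, ψ t ∈ Set.Icc (0:ℝ) 1) →
        (∀ t ∈ Set.Icc a b, |derivWithin ψ (Set.Icc a b) t| ≤ D) →
        ((∀ t ∈ Set.Icc a b, ψ t ≤ 1 / 2) ∨ (∀ t ∈ Set.Icc a b, 1 / 2 < ψ t)) →
        ∃ ψ' : ℝ → ℝ, ContDiffOn ℝ 1 ψ' (Set.Icc (4 * a) (4 * b)) ∧
          (∀ s ∈ Set.Icc (4 * a) (4 * b),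
            ψ' s ∈ Set.Icc (0:ℝ) 1 ∧ |derivWithin ψ' (Set.Icc (4 * a) (4 * b)) s| ≤ D) ∧
          ∀ t ∈ Set.Icc a b, Ta (α (t : S1)) (ψ t) = ψ' (4 * t) := by
  have hper : Function.Periodic αl 1 := fun t => by
    rw [← hlift, ← hlift, AddCircle.coe_add_period]
  obtain ⟨D, hD, hαl'⟩ := hper.exists_pos_abs_deriv_le one_ne_zero (hαl.of_le one_le_two)
  have hαl01 : ∀ t, αl t ∈ Ioc 0 1 := fun t =>
    ⟨h0.trans_le (hlift t ▸ hmin _), (hlift t ▸ hmax _).trans h1.le⟩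
  refine ⟨D, hD, fun a b hab _ ψ hψ hψ01 hψ' hbranch => ?_⟩
  obtain ⟨φ', hφ, hφ'c, hφ'D⟩ := exists_hasDerivWithinAt_Ta_comp (s := Icc a b)
    (fun t ht => (hψ.differentiableOn one_ne_zero t ht).hasDerivWithinAt)
    (fun t _ => (hαl.differentiable two_ne_zero t).hasDerivAt.hasDerivWithinAt)
    (hψ.continuousOn_derivWithin_Icc hab) (hαl.continuous_deriv one_le_two).continuousOn
    hψ01 (fun t _ => hαl01 t) hψ' (fun t _ => hαl' t) hbranch
  have hmaps : MapsTo (· / 4) (Icc (4 * a) (4 * b)) (Icc a b) := mapsTo_div_const_Icc four_pos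
  have hderiv := hasDerivWithinAt_comp_div_const_Icc four_pos hφ
  refine ⟨fun s => Ta (αl (s / 4)) (ψ (s / 4)),
    contDiffOn_Icc_of_hasDerivWithinAt (by linarith) hderiv
      ((hφ'c.comp (continuousOn_id.div_const 4) hmaps).div_const 4),
    fun s hs => ⟨Ta_mem_Icc (hαl01 _).1.le (hψ01 _ (hmaps hs)),
      abs_derivWithin_le_of_hasDerivWithinAt (hderiv s hs) ?_⟩,
    fun t _ => by simp [hlift]⟩
  rw [abs_div, abs_of_pos (four_pos : (0 : ℝ) < 4), div_le_iff₀' four_pos]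
  exact hφ'D _ (hmaps hs)

/-- Admissible curves: there is `D > 0` such that the image under `T` of the graph of a `C¹`
map `ψ : K → [0,1]` with `|ψ'| ≤ D`, over an interval `K` of length `< 1/4`, contained in
`K × [0,1/2]` or in `K × (1/2,1]`, is again the graph of a `C¹` map with derivative bounded
by `D` over `F(K)`. -/
theorem stmt6
    (α : S1 → ℝ) (αl : ℝ → ℝ)
    (hαl : ContDiff ℝ 2 αl) (hlift : ∀ t : ℝ, α (t : S1) = αl t)
    (x₀ : S1) (t₀ : ℝ) (ht₀ : (t₀ : S1) = x₀)
    (αmin αmax : ℝ)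
    (hmin : ∀ ω, αmin ≤ α ω) (hx₀ : α x₀ = αmin)
    (huniq : ∀ ω, α ω = αmin → ω = x₀)
    (hmax : ∀ ω, α ω ≤ αmax) (hmax_att : ∃ ω, α ω = αmax)
    (h0 : 0 < αmin) (h01 : αmin < αmax) (h1 : αmax < 1) (h32 : αmax < 3 / 2 * αmin)
    (h2nd : 0 < iteratedDeriv 2 αl t₀)
 :
    ∃ D : ℝ, 0 < D ∧ ∀ a b : ℝ, a ≤ b → b - a < 1 / 4 →
      ∀ ψ : ℝ → ℝ, ContDiffOn ℝ 1 ψ (Set.Icc a b) →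
        (∀ t ∈ Set.Icc a b, ψ t ∈ Set.Icc (0:ℝ) 1) →
        (∀ t ∈ Set.Icc a b, |derivWithin ψ (Set.Icc a b) t| ≤ D) →
        ((∀ t ∈ Set.Icc a b, ψ t ≤ 1 / 2) ∨ (∀ t ∈ Set.Icc a b, 1 / 2 < ψ t)) →
        ∃ ψ' : ℝ → ℝ, ContDiffOn ℝ 1 ψ' (Set.Icc (4 * a) (4 * b)) ∧
          (∀ s ∈ Set.Icc (4 * a) (4 * b),
            ψ' s ∈ Set.Icc (0:ℝ) 1 ∧ |derivWithin ψ' (Set.Icc (4 * a) (4 * b)) s| ≤ D) ∧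
          ∀ t ∈ Set.Icc a b, Ta (α (t : S1)) (ψ t) = ψ' (4 * t) :=
  stmt6_general α αl hαl hlift αmin αmax hmin hmax h0 h1
end
end

section
/- There exists D > 0 such that: whenever (ω₁, x₁), (ω₂, x₂) ∈ S¹ × [0,1/2] satisfy |x₁ − x₂| ≤ D·d_{S¹}(ω₁, ω₂) and d_{S¹}(ω₁, ω₂) ≤ 1/8, their images (ω₁', x₁') = T(ω₁, x₁) and (ω₂', x₂') = T(ω₂, x₂) satisfy |x₁' − x₂'| ≤ D·d_{S¹}(ω₁', ω₂'). -/
open MeasureTheory Real Filter Topology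
open scoped NNReal ENNReal

noncomputable section

/-- Lipschitz estimate in `x` for the branch `x (1+(2x)^a)` on `[0,1/2]`. -/
lemma stmt7_lipx {a : ℝ} (ha : 0 < a) (ha1 : a ≤ 1) {x y : ℝ}
    (hx : x ∈ Set.Icc (0:ℝ) (1/2)) (hy : y ∈ Set.Icc (0:ℝ) (1/2)) :
    |x * (1 + (2*x)^a) - y * (1 + (2*y)^a)| ≤ 3 * |x - y| := by
  set g : ℝ → ℝ := fun z => z + 2^a * z^(1+a) with hg
  have key : ∀ z ∈ Set.Icc (0:ℝ) (1/2), z * (1 + (2*z)^a) = g z := by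
    intro z hz
    have hz0 : (0:ℝ) ≤ z := hz.1
    have h1 : (2*z)^a = 2^a * z^a := Real.mul_rpow (by norm_num) hz0
    have h2 : z^(1+a) = z^(1:ℝ) * z^a := Real.rpow_add' hz0 (by positivity)
    simp only [hg, h1, h2, Real.rpow_one]
    ring
  have hder : ∀ z ∈ Set.Icc (0:ℝ) (1/2),
      HasDerivWithinAt g (1 + 2^a * ((1+a) * z^a)) (Set.Icc (0:ℝ) (1/2)) z := by
    intro z hz
    have h1 : HasDerivAt (fun z : ℝ => z^(1+a)) ((1+a) * z^((1+a)-1)) z :=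
      Real.hasDerivAt_rpow_const (Or.inr (by linarith))
    have h1' : HasDerivAt (fun z : ℝ => z^(1+a)) ((1+a) * z^a) z := by
      simpa using h1
    exact ((hasDerivAt_id z).add (h1'.const_mul _)).hasDerivWithinAt
  have hbound : ∀ z ∈ Set.Icc (0:ℝ) (1/2), ‖1 + 2^a * ((1+a) * z^a)‖ ≤ 3 := by
    intro z hz
    have hz0 : (0:ℝ) ≤ z := hz.1
    have h1 : 2^a * z^a = (2*z)^a := (Real.mul_rpow (by norm_num) hz0).symm
    have h2 : (2*z)^a ≤ 1 := Real.rpow_le_one (by linarith) (by linarith [hz.2]) ha.le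
    have h3 : (0:ℝ) ≤ (2*z)^a := Real.rpow_nonneg (by linarith) a
    have : 2^a * ((1+a) * z^a) = (1+a) * ((2*z)^a) := by rw [← h1]; ring
    rw [Real.norm_eq_abs, abs_of_nonneg (by nlinarith), this]
    nlinarith
  calc |x * (1 + (2*x)^a) - y * (1 + (2*y)^a)| = ‖g x - g y‖ := by
        rw [key x hx, key y hy, Real.norm_eq_abs]
    _ ≤ 3 * ‖x - y‖ :=
        (convex_Icc _ _).norm_image_sub_le_of_norm_hasDerivWithin_le hder hbound hy hx
    _ = 3 * |x - y| := by rw [Real.norm_eq_abs]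

/-- The bound `|t^c log t| ≤ 1/m` for `0 < t ≤ 1` and `c ≥ m > 0`. -/
lemma stmt7_logbound {t c m : ℝ} (ht : 0 < t) (ht1 : t ≤ 1) (hm : 0 < m) (hc : m ≤ c) :
    |t^c * Real.log t| ≤ 1/m := by
  have hlt : Real.log t ≤ 0 := Real.log_nonpos ht.le ht1
  have h1 : |t^c * Real.log t| = t^c * (-Real.log t) := by
    rw [abs_mul, abs_of_nonneg (Real.rpow_nonneg ht.le c), abs_of_nonpos hlt]
  have h2 : t^c ≤ t^m := Real.rpow_le_rpow_of_exponent_ge ht ht1 hc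
  set s := t^m with hs
  have hs0 : 0 < s := Real.rpow_pos_of_pos ht m
  have hlog : Real.log s = m * Real.log t := Real.log_rpow ht m
  have h3 : -Real.log s ≤ s⁻¹ - 1 := by
    have := Real.log_le_sub_one_of_pos (inv_pos.mpr hs0)
    rwa [Real.log_inv] at this
  have h4 : s * (-Real.log s) ≤ 1 := by
    have := mul_le_mul_of_nonneg_left h3 hs0.le
    have hinv : s * s⁻¹ = 1 := mul_inv_cancel₀ hs0.ne'
    nlinarith
  have h5 : m * (t^m * (-Real.log t)) = s * (-Real.log s) := by
    rw [hlog]; ring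
  rw [h1, le_div_iff₀ hm]
  have hnl : 0 ≤ -Real.log t := by linarith
  have h6 := mul_le_mul_of_nonneg_right h2 hnl
  nlinarith

/-- Lipschitz estimate in the exponent `a` for the branch `x (1+(2x)^a)` on `[0,1/2]`. -/
lemma stmt7_lipa {m a b x : ℝ} (hm : 0 < m) (ha : m ≤ a) (hb : m ≤ b)
    (hx : x ∈ Set.Icc (0:ℝ) (1/2)) :
    |x * (1 + (2*x)^a) - x * (1 + (2*x)^b)| ≤ (1/(2*m)) * |a - b| := by
  have hx0 := hx.1
  have heq : x * (1 + (2*x)^a) - x * (1 + (2*x)^b) = x * ((2*x)^a - (2*x)^b) := by ring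
  rw [heq, abs_mul, abs_of_nonneg hx0]
  rcases eq_or_lt_of_le hx0 with h0 | h0
  · rw [← h0]; simp; positivity
  set t := 2*x with hts
  have ht : 0 < t := by simp [hts]; linarith
  have ht1 : t ≤ 1 := by simp [hts]; linarith [hx.2]
  have hder : ∀ c ∈ Set.Ici m,
      HasDerivWithinAt (fun c => t^c) (t^c * Real.log t) (Set.Ici m) c := by
    intro c _
    exact ((Real.hasStrictDerivAt_const_rpow ht c).hasDerivAt).hasDerivWithinAt
  have hbound : ∀ c ∈ Set.Ici m, ‖t^c * Real.log t‖ ≤ 1/m := by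
    intro c hc
    rw [Real.norm_eq_abs]
    exact stmt7_logbound ht ht1 hm hc
  have key : |t^a - t^b| ≤ (1/m) * |a - b| := by
    have := (convex_Ici m).norm_image_sub_le_of_norm_hasDerivWithin_le hder hbound hb ha
    simpa [Real.norm_eq_abs] using this
  calc x * |t^a - t^b| ≤ (1/2) * ((1/m) * |a-b|) := by
        apply mul_le_mul hx.2 key (abs_nonneg _) (by norm_num)
    _ = (1/(2*m)) * |a-b| := by field_simp

lemma stmt7_coe_int_zero (n : ℤ) : ((n : ℝ) : S1) = 0 := by
  have h : ((n : ℝ)) = n • (1:ℝ) := by simp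
  rw [h, QuotientAddGroup.mk_zsmul]
  have : ((1:ℝ) : S1) = 0 := AddCircle.coe_period 1
  rw [this, smul_zero]

lemma stmt7_norm_coe (x : ℝ) : ‖(x : S1)‖ = |x - round x| := by
  rw [AddCircle.norm_eq]; norm_num

lemma stmt7_coe_nsmul (r : ℝ) : ((4:ℕ) • ((r:ℝ):S1)) = ((4*r : ℝ) : S1) := by
  rw [show (4*r : ℝ) = (4:ℕ) • r by simp, QuotientAddGroup.mk_nsmul]

/-- Representation of a pair of points on the circle by real lifts realizing the distance. -/
lemma stmt7_s1_repr (ω₁ ω₂ : S1) :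
    ∃ t s : ℝ, ω₂ = (t:S1) ∧ ω₁ = ((t+s:ℝ):S1) ∧ |s| = dist ω₁ ω₂ := by
  obtain ⟨t₁⟩ := ω₁
  obtain ⟨t₂⟩ := ω₂
  set s : ℝ := (t₁ - t₂) - round (t₁ - t₂) with hs
  refine ⟨t₂, s, rfl, ?_, ?_⟩
  · have : ((t₂ + s : ℝ) : S1) = (t₁ : S1) - ((round (t₁ - t₂) : ℝ) : S1) := by
      rw [hs]
      rw [show t₂ + (t₁ - t₂ - ↑(round (t₁ - t₂))) = t₁ - (round (t₁ - t₂) : ℝ) by ring]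
      exact QuotientAddGroup.mk_sub _ _ _
    rw [this, stmt7_coe_int_zero, sub_zero]
    rfl
  · have h1 : dist ((t₁:S1)) ((t₂:S1)) = ‖((t₁ - t₂ : ℝ) : S1)‖ := by
      rw [dist_eq_norm, ← QuotientAddGroup.mk_sub]
    have h2 : ‖((t₁ - t₂ : ℝ) : S1)‖ = |s| := stmt7_norm_coe _
    exact (h2 ▸ h1).symm

/-- For nearby points, `F` multiplies distances by exactly `4`. -/
lemma stmt7_dist_Fm {ω₁ ω₂ : S1} {t s : ℝ} (h2 : ω₂ = (t:S1)) (h1 : ω₁ = ((t+s:ℝ):S1))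
    (hsmall : |s| ≤ 1/8) : dist (Fm ω₁) (Fm ω₂) = 4 * |s| := by
  rw [h1, h2]
  show dist ((4:ℕ) • ((t+s:ℝ):S1)) ((4:ℕ) • ((t:ℝ):S1)) = 4 * |s|
  rw [stmt7_coe_nsmul, stmt7_coe_nsmul, dist_eq_norm, ← QuotientAddGroup.mk_sub,
    show 4*(t+s) - 4*t = 4*s by ring]
  rw [(AddCircle.norm_coe_eq_abs_iff (1:ℝ) one_ne_zero).mpr
    (by rw [abs_mul]; norm_num; linarith [abs_nonneg s])]
  rw [abs_mul]; norm_num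

/-- There is `D > 0` such that if `(ω₁,x₁), (ω₂,x₂) ∈ S¹ × [0,1/2]` satisfy
`|x₁ - x₂| ≤ D d(ω₁,ω₂)` and `d(ω₁,ω₂) ≤ 1/8`, then the images under `T` satisfy
`|x₁' - x₂'| ≤ D d(ω₁',ω₂')`. -/
theorem stmt7
    (α : S1 → ℝ) (αl : ℝ → ℝ)
    (hαl : ContDiff ℝ 2 αl) (hlift : ∀ t : ℝ, α (t : S1) = αl t)
    (x₀ : S1) (t₀ : ℝ) (ht₀ : (t₀ : S1) = x₀)
    (αmin αmax : ℝ)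
    (hmin : ∀ ω, αmin ≤ α ω) (hx₀ : α x₀ = αmin)
    (huniq : ∀ ω, α ω = αmin → ω = x₀)
    (hmax : ∀ ω, α ω ≤ αmax) (hmax_att : ∃ ω, α ω = αmax)
    (h0 : 0 < αmin) (h01 : αmin < αmax) (h1 : αmax < 1) (h32 : αmax < 3 / 2 * αmin)
    (h2nd : 0 < iteratedDeriv 2 αl t₀)
 :
    ∃ D : ℝ, 0 < D ∧ ∀ ω₁ ω₂ : S1, ∀ x₁ x₂ : ℝ,
      x₁ ∈ Set.Icc (0:ℝ) (1 / 2) → x₂ ∈ Set.Icc (0:ℝ) (1 / 2) →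
      |x₁ - x₂| ≤ D * dist ω₁ ω₂ → dist ω₁ ω₂ ≤ 1 / 8 →
      |Ta (α ω₁) x₁ - Ta (α ω₂) x₂| ≤ D * dist (Fm ω₁) (Fm ω₂) := by
  -- `αl` is periodic with period 1
  have hper : Function.Periodic αl 1 := by
    intro t
    rw [← hlift, ← hlift, AddCircle.coe_add_period]
  have hd : Differentiable ℝ αl := hαl.differentiable (by norm_num)
  -- the derivative is periodic
  have hdper : Function.Periodic (deriv αl) 1 := by
    intro t
    have hfun : (fun y : ℝ => αl (y + 1)) = αl := funext fun y => hper y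
    have := deriv_comp_add_const αl 1 t
    rw [hfun] at this
    rw [← this]
  -- bound for the derivative on [0,1]
  obtain ⟨C, hC⟩ : ∃ C, ∀ u ∈ Set.Icc (0:ℝ) 1, ‖deriv αl u‖ ≤ C :=
    (isCompact_Icc).exists_bound_of_continuousOn
      ((hαl.continuous_deriv (by norm_num)).continuousOn)
  have hC0 : 0 ≤ C := le_trans (norm_nonneg _) (hC 0 (by norm_num))
  -- global bound via periodicity
  have hCg : ∀ u : ℝ, ‖deriv αl u‖ ≤ C := by
    intro u
    have h1 : deriv αl (u - (⌊u⌋ : ℤ) * 1) = deriv αl u := hdper.sub_int_mul_eq ⌊u⌋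
    have h2 : u - (⌊u⌋ : ℤ) * 1 ∈ Set.Icc (0:ℝ) 1 := by
      constructor
      · simp only [mul_one]; linarith [Int.floor_le u]
      · simp only [mul_one]; linarith [Int.lt_floor_add_one u]
    rw [← h1]
    exact hC _ h2
  -- global Lipschitz property of αl
  have hLip : ∀ u v : ℝ, |αl u - αl v| ≤ C * |u - v| := by
    intro u v
    have := convex_univ.norm_image_sub_le_of_norm_hasDerivWithin_le
      (f := αl) (f' := deriv αl) (s := Set.univ)
      (fun z _ => (hd z).hasDerivAt.hasDerivWithinAt)
      (fun z _ => hCg z) (Set.mem_univ v) (Set.mem_univ u)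
    simpa [Real.norm_eq_abs] using this
  -- Lipschitz property of α on the circle
  have hαLip : ∀ ω₁ ω₂ : S1, |α ω₁ - α ω₂| ≤ C * dist ω₁ ω₂ := by
    intro ω₁ ω₂
    obtain ⟨t, s, hr2, hr1, habs⟩ := stmt7_s1_repr ω₁ ω₂
    rw [← habs, hr1, hr2, hlift, hlift]
    have := hLip (t + s) t
    simpa using this
  -- choose D
  obtain ⟨D, hD⟩ : ∃ D : ℝ, D = C/(2*αmin) + 1 := ⟨_, rfl⟩
  have hDpos : 0 < D := by rw [hD]; positivity
  refine ⟨D, hDpos, ?_⟩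
  intro ω₁ ω₂ x₁ x₂ hx₁ hx₂ hclose hdist
  obtain ⟨t, s, hr2, hr1, habs⟩ := stmt7_s1_repr ω₁ ω₂
  have hsmall : |s| ≤ 1/8 := by rw [habs]; exact hdist
  have hF : dist (Fm ω₁) (Fm ω₂) = 4 * dist ω₁ ω₂ := by
    rw [stmt7_dist_Fm hr2 hr1 hsmall, habs]
  -- reduce Ta to the first branch
  have hTa1 : Ta (α ω₁) x₁ = x₁ * (1 + (2*x₁)^(α ω₁)) := if_pos hx₁.2
  have hTa2 : Ta (α ω₂) x₂ = x₂ * (1 + (2*x₂)^(α ω₂)) := if_pos hx₂.2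
  rw [hTa1, hTa2]
  have ha₁ : 0 < α ω₁ := lt_of_lt_of_le h0 (hmin ω₁)
  have ha₁1 : α ω₁ ≤ 1 := le_of_lt (lt_of_le_of_lt (hmax ω₁) h1)
  have step1 : |x₁ * (1 + (2*x₁)^(α ω₁)) - x₂ * (1 + (2*x₂)^(α ω₁))| ≤ 3 * |x₁ - x₂| :=
    stmt7_lipx ha₁ ha₁1 hx₁ hx₂
  have step2 : |x₂ * (1 + (2*x₂)^(α ω₁)) - x₂ * (1 + (2*x₂)^(α ω₂))|
      ≤ (1/(2*αmin)) * |α ω₁ - α ω₂| :=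
    stmt7_lipa h0 (hmin ω₁) (hmin ω₂) hx₂
  have tri : |x₁ * (1 + (2*x₁)^(α ω₁)) - x₂ * (1 + (2*x₂)^(α ω₂))|
      ≤ |x₁ * (1 + (2*x₁)^(α ω₁)) - x₂ * (1 + (2*x₂)^(α ω₁))|
        + |x₂ * (1 + (2*x₂)^(α ω₁)) - x₂ * (1 + (2*x₂)^(α ω₂))| := abs_sub_le _ _ _
  have hdnn : 0 ≤ dist ω₁ ω₂ := dist_nonneg
  have hαd : |α ω₁ - α ω₂| ≤ C * dist ω₁ ω₂ := hαLip ω₁ ω₂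
  have hmain : |x₁ * (1 + (2*x₁)^(α ω₁)) - x₂ * (1 + (2*x₂)^(α ω₂))|
      ≤ 3 * (D * dist ω₁ ω₂) + (1/(2*αmin)) * (C * dist ω₁ ω₂) := by
    have s2 : (1/(2*αmin)) * |α ω₁ - α ω₂| ≤ (1/(2*αmin)) * (C * dist ω₁ ω₂) := by
      apply mul_le_mul_of_nonneg_left hαd (by positivity)
    have s1 : 3 * |x₁ - x₂| ≤ 3 * (D * dist ω₁ ω₂) := by linarith
    linarith
  rw [hF]
  have hfinal : 3 * (D * dist ω₁ ω₂) + (1/(2*αmin)) * (C * dist ω₁ ω₂)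
      ≤ D * (4 * dist ω₁ ω₂) := by
    have hDC : (1/(2*αmin)) * C ≤ D := by
      rw [hD]
      have : (1/(2*αmin)) * C = C/(2*αmin) := by ring
      rw [this]
      linarith
    nlinarith
  linarith
end
end

section
/- There exist λ > 1, a > 0 and q ∈ ℕ with 4^{−q} < 1/8 such that, defining d'((ω₁,x₁),(ω₂,x₂)) = a·|x₁ − x₂| + d_{S¹}(ω₁,ω₂), the following holds: for every n ≥ 1, every s ∈ {0, …, 4^{q+n} − 1} and all points (ω₁,x₁), (ω₂,x₂) with ω_i in the arc [s/4^{q+n}, (s+1)/4^{q+n}] of S¹ and x_i ∈ J_n(ω_i) (i = 1, 2), one has d'(T^n(ω₁,x₁), T^n(ω₂,x₂)) ≥ λ·d'((ω₁,x₁),(ω₂,x₂)). -/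
/-
Take `λ = 2`, `q = 2` and `a = 1/(1+K)` with `K` a Lipschitz constant of the C¹ periodic function
`α`. On `J_n(ω)` the first step of `T` is `x ↦ 2x - 1`, after which the fibre coordinate follows the
chain `X_{n-k+1} ≤ · ≤ X_{n-k}` and so stays in `[0, 1/2]` for `n - 1` more steps. There every
`T_a` is non-contracting and `a ↦ T_a(v)` is 1-Lipschitz, so after `n` steps the fibre distance is
at least `2|x₁ - x₂| - K 4^n |t₁ - t₂| / 3`. On an arc of length `4^{-(n+2)}` the base distance is
multiplied by exactly `4^n`, which pays for the error since `aK ≤ 1`.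
-/

open MeasureTheory Real Filter Topology
open scoped NNReal ENNReal

noncomputable section

open Set

theorem Function.Periodic.exists_lipschitzWith {f : ℝ → ℝ} {c : ℝ} (hp : Function.Periodic f c)
    (hc : c ≠ 0) (hf : ContDiff ℝ 1 f) : ∃ K, LipschitzWith K f := by
  have hderiv : Function.Periodic (deriv f) c := fun x => by
    rw [← deriv_comp_add_const, funext hp]
  obtain ⟨C, hC⟩ := isBounded_iff_forall_norm_le.mp
    (hderiv.isBounded_of_continuous hc hf.continuous_deriv_one)
  refine ⟨C.toNNReal, lipschitzWith_of_nnnorm_deriv_le (hf.differentiable one_ne_zero) fun x => ?_⟩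
  rw [← NNReal.coe_le_coe, coe_nnnorm, Real.coe_toNNReal']
  exact (hC _ (mem_range_self x)).trans (le_max_left _ _)

theorem Ta_of_le {a x : ℝ} (hx : x ≤ 1 / 2) : Ta a x = x * (1 + (2 * x) ^ a) := if_pos hx

theorem Ta_of_one_half_lt {a x : ℝ} (hx : 1 / 2 < x) : Ta a x = 2 * x - 1 := if_neg hx.not_ge

theorem Ta_one_half (a : ℝ) : Ta a (1 / 2) = 1 := by
  norm_num [Ta_of_le]

theorem Ta_zero (a : ℝ) : Ta a 0 = 0 := by
  simp [Ta_of_le]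

theorem sub_le_Ta_sub_Ta {a u v : ℝ} (ha : 0 ≤ a) (hv : 0 ≤ v) (hvu : v ≤ u) (hu : u ≤ 1 / 2) :
    u - v ≤ Ta a u - Ta a v := by
  rw [Ta_of_le hu, Ta_of_le (hvu.trans hu)]
  have : v * (2 * v) ^ a ≤ u * (2 * u) ^ a := by
    have := hv.trans hvu
    gcongr
  linarith

theorem abs_sub_le_abs_Ta_sub_Ta {a u v : ℝ} (ha : 0 ≤ a) (hu : u ∈ Icc (0 : ℝ) (1 / 2))
    (hv : v ∈ Icc (0 : ℝ) (1 / 2)) : |u - v| ≤ |Ta a u - Ta a v| := by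
  wlog hvu : v ≤ u generalizing u v
  · rw [abs_sub_comm, abs_sub_comm (Ta a u)]
    exact this hv hu (le_of_not_ge hvu)
  have h := sub_le_Ta_sub_Ta ha hv.1 hvu hu.2
  rw [abs_of_nonneg (sub_nonneg.mpr hvu), abs_of_nonneg (by linarith)]
  exact h

theorem mul_one_sub_rpow_le {t c : ℝ} (ht0 : 0 ≤ t) (ht1 : t ≤ 1) (hc : 0 ≤ c) :
    t * (1 - t ^ c) ≤ c := by
  rcases ht0.eq_or_lt with rfl | ht0
  · simpa using hc
  have hexp : 1 - t ^ c ≤ c * -Real.log t := by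
    have := Real.add_one_le_exp (Real.log t * c)
    rw [← Real.rpow_def_of_pos ht0] at this
    linarith
  have hlog : t * -Real.log t ≤ 1 := by
    have := Real.abs_log_mul_self_lt t ht0 ht1
    rw [abs_lt] at this
    linarith
  calc t * (1 - t ^ c) ≤ t * (c * -Real.log t) := by gcongr
    _ = c * (t * -Real.log t) := by ring
    _ ≤ c * 1 := by gcongr
    _ = c := mul_one c

theorem abs_Ta_sub_Ta_le {a b v : ℝ} (ha : 0 < a) (hb : 0 < b) (hv : v ∈ Icc (0 : ℝ) (1 / 2)) :
    |Ta a v - Ta b v| ≤ |a - b| := by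
  wlog hba : b ≤ a generalizing a b
  · rw [abs_sub_comm, abs_sub_comm a]
    exact this hb ha (le_of_not_ge hba)
  obtain ⟨hv0, hv1⟩ := hv
  set t := 2 * v
  have ht0 : 0 ≤ t := by positivity
  have ht1 : t ≤ 1 := by linarith
  have hsplit : t ^ a = t ^ b * t ^ (a - b) := by
    rw [← Real.rpow_add' ht0 (by linarith)]; ring_nf
  have htb : t ^ b ≤ 1 := Real.rpow_le_one ht0 ht1 hb.le
  have htab : t ^ (a - b) ≤ 1 := Real.rpow_le_one ht0 ht1 (by linarith)
  have key := mul_one_sub_rpow_le ht0 ht1 (sub_nonneg.mpr hba)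
  have hdiff : Ta b v - Ta a v = v * t ^ b * (1 - t ^ (a - b)) := by
    rw [Ta_of_le hv1, Ta_of_le hv1, hsplit]; ring
  have h0 : 0 ≤ v * t ^ b * (1 - t ^ (a - b)) := by
    have := Real.rpow_nonneg ht0 b
    have : 0 ≤ 1 - t ^ (a - b) := by linarith
    positivity
  have h1 : v * t ^ b * (1 - t ^ (a - b)) ≤ t * (1 - t ^ (a - b)) := by
    have := Real.rpow_nonneg ht0 b
    have : 0 ≤ 1 - t ^ (a - b) := by linarith
    have : v * t ^ b ≤ t := by nlinarith
    gcongr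
  rw [abs_sub_comm, abs_of_nonneg (by linarith), abs_of_nonneg (by linarith)]
  linarith

theorem abs_sub_sub_abs_sub_le_abs_Ta_sub_Ta {a b u v : ℝ} (ha : 0 < a) (hb : 0 < b)
    (hu : u ∈ Icc (0 : ℝ) (1 / 2)) (hv : v ∈ Icc (0 : ℝ) (1 / 2)) :
    |u - v| - |a - b| ≤ |Ta a u - Ta b v| := by
  have h1 := abs_sub_le_abs_Ta_sub_Ta ha.le hu hv
  have h2 := abs_Ta_sub_Ta_le ha hb hv
  have h3 := abs_sub_le (Ta a u) (Ta b v) (Ta a v)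
  rw [abs_sub_comm (Ta b v)] at h3
  linarith

theorem Fm_coe (u : ℝ) : Fm (u : S1) = ((4 * u : ℝ) : S1) := by
  rw [Fm, ← AddCircle.coe_nsmul, nsmul_eq_mul, Nat.cast_ofNat]

theorem Fm_iterate_coe (k : ℕ) (u : ℝ) : Fm^[k] (u : S1) = ((4 ^ k * u : ℝ) : S1) := by
  induction k with
  | zero => simp
  | succ k ih =>
    rw [Function.iterate_succ_apply', ih, Fm_coe, pow_succ, mul_comm _ (4 : ℝ), mul_assoc]

theorem Tskew_snd (α : S1 → ℝ) (p : S1 × ℝ) : (Tskew α p).2 = Ta (α p.1) p.2 := rfl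

theorem Tskew_iterate_fst (α : S1 → ℝ) (k : ℕ) (p : S1 × ℝ) :
    ((Tskew α)^[k] p).1 = Fm^[k] p.1 := by
  induction k with
  | zero => rfl
  | succ k ih => rw [Function.iterate_succ_apply', Function.iterate_succ_apply', ← ih]; rfl

theorem dist_coe_eq_abs_sub {u v : ℝ} (h : |u - v| ≤ 1 / 2) :
    dist (u : S1) (v : S1) = |u - v| := by
  rw [dist_eq_norm, ← AddCircle.coe_sub]
  exact (AddCircle.norm_coe_eq_abs_iff (p := 1) one_ne_zero).mpr (by simpa using h)

structure IsPreimageSeq (α : S1 → ℝ) (X : ℕ → S1 → ℝ) : Prop where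
  zero : ∀ ω, X 0 ω = 1
  one : ∀ ω, X 1 ω = 1 / 2
  succ_mem_Icc : ∀ n, 1 ≤ n → ∀ ω, X (n + 1) ω ∈ Icc (0 : ℝ) (1 / 2)
  Ta_succ : ∀ n, 1 ≤ n → ∀ ω, Ta (α ω) (X (n + 1) ω) = X n (Fm ω)

/-- The paper's `J_n(ω) = [Y_{n+1}(ω), Y_n(ω)]`. -/
def J (X : ℕ → S1 → ℝ) (n : ℕ) (ω : S1) : Set ℝ :=
  Icc ((1 + X n (Fm ω)) / 2) ((1 + X (n - 1) (Fm ω)) / 2)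

namespace IsPreimageSeq

variable {α : S1 → ℝ} {X : ℕ → S1 → ℝ}

theorem mem_Icc (hX : IsPreimageSeq α X) {m : ℕ} (hm : 1 ≤ m) (ω : S1) :
    X m ω ∈ Icc (0 : ℝ) (1 / 2) := by
  obtain rfl | hm := hm.eq_or_lt
  · rw [hX.one]; norm_num
  · obtain ⟨k, rfl⟩ : ∃ k, m = k + 2 := ⟨m - 2, by omega⟩
    exact hX.succ_mem_Icc (k + 1) (by omega) ω

theorem pos (hX : IsPreimageSeq α X) {m : ℕ} (hm : 1 ≤ m) (ω : S1) : 0 < X m ω := by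
  induction m, hm using Nat.le_induction generalizing ω with
  | base => rw [hX.one]; norm_num
  | succ m hm ih =>
    refine (hX.mem_Icc (by omega) ω).1.lt_of_ne fun h => (ih (Fm ω)).ne ?_
    rw [← hX.Ta_succ m hm, ← h, Ta_zero]

theorem Ta_eq (hX : IsPreimageSeq α X) {m : ℕ} (hm : 1 ≤ m) (ω : S1) :
    Ta (α ω) (X m ω) = X (m - 1) (Fm ω) := by
  obtain rfl | hm := hm.eq_or_lt
  · rw [hX.one, Ta_one_half, hX.zero]
  · obtain ⟨k, rfl⟩ : ∃ k, m = k + 2 := ⟨m - 2, by omega⟩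
    exact hX.Ta_succ (k + 1) (by omega) ω

theorem Ta_mem_Icc (hX : IsPreimageSeq α X) {ω : S1} (hα : 0 ≤ α ω) {m : ℕ} (hm : 1 ≤ m) {x : ℝ}
    (hx : x ∈ Icc (X (m + 1) ω) (X m ω)) :
    Ta (α ω) x ∈ Icc (X m (Fm ω)) (X (m - 1) (Fm ω)) := by
  have hlo := hX.mem_Icc (m := m + 1) (by omega) ω
  have hhi := hX.mem_Icc hm ω
  rw [← hX.Ta_succ m hm, ← hX.Ta_eq hm]
  constructor
  · linarith [hx.1, sub_le_Ta_sub_Ta hα hlo.1 hx.1 (hx.2.trans hhi.2)]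
  · linarith [hx.2, sub_le_Ta_sub_Ta hα (hlo.1.trans hx.1) hx.2 hhi.2]

theorem Tskew_iterate_snd_mem_Icc (hX : IsPreimageSeq α X) (hα : ∀ ω, 0 ≤ α ω) {m : ℕ}
    {p : S1 × ℝ} (hp : p.2 ∈ Icc (X (m + 1) p.1) (X m p.1)) {j : ℕ} (hj : j ≤ m) :
    ((Tskew α)^[j] p).2 ∈
      Icc (X (m - j + 1) ((Tskew α)^[j] p).1) (X (m - j) ((Tskew α)^[j] p).1) := by
  induction j with
  | zero => simpa using hp
  | succ j ih =>
    have h := hX.Ta_mem_Icc (hα _) (by omega) (ih (by omega))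
    rw [show m - j - 1 = m - (j + 1) by omega, show m - j = m - (j + 1) + 1 by omega] at h
    rwa [Function.iterate_succ_apply']

theorem Tskew_of_mem_J (hX : IsPreimageSeq α X) {n : ℕ} (hn : 1 ≤ n) {ω : S1} {x : ℝ}
    (hx : x ∈ J X n ω) : Tskew α (ω, x) = (Fm ω, 2 * x - 1) := by
  have := hX.pos hn (Fm ω)
  rw [Tskew, Ta_of_one_half_lt (by linarith [hx.1])]

theorem Tskew_iterate_snd_mem_Icc_of_mem_J (hX : IsPreimageSeq α X) (hα : ∀ ω, 0 ≤ α ω) {n : ℕ}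
    {ω : S1} {x : ℝ} (hx : x ∈ J X n ω) {k : ℕ} (hk : 1 ≤ k) (hkn : k < n) :
    ((Tskew α)^[k] (ω, x)).2 ∈ Icc (0 : ℝ) (1 / 2) := by
  obtain ⟨j, rfl⟩ := Nat.exists_eq_add_of_le' hk
  have hp : (Tskew α (ω, x)).2 ∈
      Icc (X (n - 1 + 1) (Tskew α (ω, x)).1) (X (n - 1) (Tskew α (ω, x)).1) := by
    rw [hX.Tskew_of_mem_J (by omega) hx, Nat.sub_add_cancel (by omega)]
    constructor <;> linarith [hx.1, hx.2]
  have h := hX.Tskew_iterate_snd_mem_Icc hα hp (j := j) (by omega)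
  rw [← Function.iterate_succ_apply] at h
  exact ⟨(hX.mem_Icc (by omega) _).1.trans h.1, h.2.trans (hX.mem_Icc (by omega) _).2⟩

theorem abs_alpha_Tskew_iterate_sub_le {K : ℝ≥0} (hK : LipschitzWith K (fun t : ℝ => α t))
    (k : ℕ) (t₁ t₂ x₁ x₂ : ℝ) :
    |α ((Tskew α)^[k] (t₁, x₁)).1 - α ((Tskew α)^[k] (t₂, x₂)).1| ≤ K * |t₁ - t₂| * 4 ^ k := by
  have := hK.dist_le_mul (4 ^ k * t₁) (4 ^ k * t₂)
  rw [Real.dist_eq, Real.dist_eq, ← mul_sub, abs_mul,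
    abs_of_pos (by positivity : (0 : ℝ) < 4 ^ k)] at this
  rw [Tskew_iterate_fst, Tskew_iterate_fst, Fm_iterate_coe, Fm_iterate_coe]
  linarith

/-- The first step doubles the fibre distance and the later ones, taking place in `[0, 1/2]`, do
not shrink it, up to the error `|α ω₁ - α ω₂| ≤ K 4^k |t₁ - t₂|` at step `k`; these errors sum to
less than `K 4^k |t₁ - t₂| / 3`. -/
theorem two_mul_abs_sub_le (hX : IsPreimageSeq α X) (hα : ∀ ω, 0 < α ω) {K : ℝ≥0}
    (hK : LipschitzWith K (fun t : ℝ => α t)) {n : ℕ} {t₁ t₂ x₁ x₂ : ℝ} (hx₁ : x₁ ∈ J X n t₁)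
    (hx₂ : x₂ ∈ J X n t₂) {k : ℕ} (hk : 1 ≤ k) (hkn : k ≤ n) :
    2 * |x₁ - x₂| ≤
      |((Tskew α)^[k] (t₁, x₁)).2 - ((Tskew α)^[k] (t₂, x₂)).2| + K * |t₁ - t₂| * 4 ^ k / 3 := by
  induction k, hk using Nat.le_induction with
  | base =>
    rw [Function.iterate_one, hX.Tskew_of_mem_J (by omega) hx₁, hX.Tskew_of_mem_J (by omega) hx₂,
      show 2 * x₁ - 1 - (2 * x₂ - 1) = 2 * (x₁ - x₂) by ring, abs_mul, abs_two]
    have : 0 ≤ (K : ℝ) * |t₁ - t₂| := by positivity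
    linarith
  | succ k hk ih =>
    have hα' : ∀ ω, 0 ≤ α ω := fun ω => (hα ω).le
    have hstep := abs_sub_sub_abs_sub_le_abs_Ta_sub_Ta
      (hα ((Tskew α)^[k] (t₁, x₁)).1) (hα ((Tskew α)^[k] (t₂, x₂)).1)
      (hX.Tskew_iterate_snd_mem_Icc_of_mem_J hα' hx₁ hk (by omega))
      (hX.Tskew_iterate_snd_mem_Icc_of_mem_J hα' hx₂ hk (by omega))
    have hlip := abs_alpha_Tskew_iterate_sub_le hK k t₁ t₂ x₁ x₂
    rw [Function.iterate_succ_apply', Function.iterate_succ_apply', Tskew_snd, Tskew_snd, pow_succ]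
    linarith [ih (by omega)]

theorem two_mul_le_of_mem_J (hX : IsPreimageSeq α X) (hα : ∀ ω, 0 < α ω) {K : ℝ≥0}
    (hK : LipschitzWith K (fun t : ℝ => α t)) {a : ℝ} (ha : 0 ≤ a) (haK : a * K ≤ 1)
    {n : ℕ} (hn : 1 ≤ n) {t₁ t₂ x₁ x₂ : ℝ} (ht : |t₁ - t₂| ≤ 1 / (2 * 4 ^ n))
    (hx₁ : x₁ ∈ J X n t₁) (hx₂ : x₂ ∈ J X n t₂) :
    2 * (a * |x₁ - x₂| + dist (t₁ : S1) (t₂ : S1)) ≤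
      a * |((Tskew α)^[n] ((t₁ : S1), x₁)).2 - ((Tskew α)^[n] ((t₂ : S1), x₂)).2| +
        dist ((Tskew α)^[n] ((t₁ : S1), x₁)).1 ((Tskew α)^[n] ((t₂ : S1), x₂)).1 := by
  have h4n : (4 : ℝ) ≤ 4 ^ n := le_self_pow₀ (by norm_num) (by omega)
  have hnt : 4 ^ n * |t₁ - t₂| ≤ 1 / 2 := by
    calc 4 ^ n * |t₁ - t₂| ≤ 4 ^ n * (1 / (2 * 4 ^ n)) := by gcongr
      _ = 1 / 2 := by field_simp
  have hdist₀ : dist (t₁ : S1) t₂ = |t₁ - t₂| :=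
    dist_coe_eq_abs_sub (by nlinarith [abs_nonneg (t₁ - t₂)])
  have hdistn : dist ((Tskew α)^[n] ((t₁ : S1), x₁)).1 ((Tskew α)^[n] ((t₂ : S1), x₂)).1 =
      4 ^ n * |t₁ - t₂| := by
    have h4 : |(4 : ℝ) ^ n| = 4 ^ n := abs_of_pos (by positivity)
    have hmul : |4 ^ n * t₁ - 4 ^ n * t₂| = 4 ^ n * |t₁ - t₂| := by rw [← mul_sub, abs_mul, h4]
    rw [Tskew_iterate_fst, Tskew_iterate_fst, Fm_iterate_coe, Fm_iterate_coe, ← hmul]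
    exact dist_coe_eq_abs_sub (hmul ▸ hnt)
  have hest := mul_le_mul_of_nonneg_left (hX.two_mul_abs_sub_le hα hK hx₁ hx₂ hn le_rfl) ha
  have herr := mul_le_mul_of_nonneg_right haK
    (by positivity : (0 : ℝ) ≤ |t₁ - t₂| * 4 ^ n / 3)
  rw [hdist₀, hdistn]
  nlinarith [abs_nonneg (t₁ - t₂)]

end IsPreimageSeq

theorem stmt8_general
    (α : S1 → ℝ) (αl : ℝ → ℝ)
    (hαl : ContDiff ℝ 2 αl) (hlift : ∀ t : ℝ, α (t : S1) = αl t)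
    (αmin : ℝ)
    (hmin : ∀ ω, αmin ≤ α ω)
    (h0 : 0 < αmin)
    (X : ℕ → S1 → ℝ)
    (hX0 : ∀ ω, X 0 ω = 1) (hX1 : ∀ ω, X 1 ω = 1 / 2)
    (hXmem : ∀ n, 1 ≤ n → ∀ ω, X (n + 1) ω ∈ Set.Icc (0:ℝ) (1 / 2))
    (hXrec : ∀ n, 1 ≤ n → ∀ ω, Ta (α ω) (X (n + 1) ω) = X n (Fm ω))
 :
    ∃ lam : ℝ, 1 < lam ∧ ∃ a : ℝ, 0 < a ∧ ∃ q : ℕ, ((1:ℝ) / 4) ^ q < 1 / 8 ∧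
      ∀ n : ℕ, 1 ≤ n → ∀ s : ℕ, s < 4 ^ (q + n) →
      ∀ t₁ t₂ x₁ x₂ : ℝ,
        t₁ ∈ Set.Icc ((s : ℝ) / 4 ^ (q + n)) (((s : ℝ) + 1) / 4 ^ (q + n)) →
        t₂ ∈ Set.Icc ((s : ℝ) / 4 ^ (q + n)) (((s : ℝ) + 1) / 4 ^ (q + n)) →
        x₁ ∈ Set.Icc ((1 + X n (Fm (t₁ : S1))) / 2) ((1 + X (n - 1) (Fm (t₁ : S1))) / 2) →
        x₂ ∈ Set.Icc ((1 + X n (Fm (t₂ : S1))) / 2) ((1 + X (n - 1) (Fm (t₂ : S1))) / 2) →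
        lam * (a * |x₁ - x₂| + dist (t₁ : S1) (t₂ : S1)) ≤
          a * |((Tskew α)^[n] ((t₁ : S1), x₁)).2 - ((Tskew α)^[n] ((t₂ : S1), x₂)).2| +
            dist ((Tskew α)^[n] ((t₁ : S1), x₁)).1 ((Tskew α)^[n] ((t₂ : S1), x₂)).1 := by
  have hX : IsPreimageSeq α X := ⟨hX0, hX1, hXmem, hXrec⟩
  have hα : ∀ ω, 0 < α ω := fun ω => h0.trans_le (hmin ω)
  obtain ⟨K, hK⟩ : ∃ K, LipschitzWith K (fun t : ℝ => α t) := by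
    have hper : Function.Periodic αl 1 := fun t => by
      rw [← hlift, ← hlift, AddCircle.coe_add_period]
    simpa only [hlift] using hper.exists_lipschitzWith one_ne_zero (hαl.of_le one_le_two)
  have haK : 1 / (1 + (K : ℝ)) * K ≤ 1 := by
    rw [div_mul_eq_mul_div, one_mul, div_le_one (by positivity)]
    linarith
  refine ⟨2, one_lt_two, 1 / (1 + K), by positivity, 2, by norm_num, ?_⟩
  intro n hn s _ t₁ t₂ x₁ x₂ ht₁ ht₂ hx₁ hx₂
  have ht : |t₁ - t₂| ≤ 1 / (2 * 4 ^ n) := by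
    calc |t₁ - t₂| ≤ ((s : ℝ) + 1) / 4 ^ (2 + n) - s / 4 ^ (2 + n) := by
          simpa only [Real.dist_eq] using Real.dist_le_of_mem_Icc ht₁ ht₂
      _ = 1 / (16 * 4 ^ n) := by rw [pow_add]; ring
      _ ≤ 1 / (2 * 4 ^ n) := by gcongr; norm_num
  exact hX.two_mul_le_of_mem_J hα hK (by positivity) haK hn ht hx₁ hx₂

/-- Expansion of the induced map: there are `λ > 1`, `a > 0` and `q` with `4^{-q} < 1/8` such
that `T^n` expands the metric `d'((ω₁,x₁),(ω₂,x₂)) = a|x₁-x₂| + d(ω₁,ω₂)` by at least `λ` on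
each set `A_{s,n} = [s/4^{q+n}, (s+1)/4^{q+n}] × J_n`. -/
theorem stmt8
    (α : S1 → ℝ) (αl : ℝ → ℝ)
    (hαl : ContDiff ℝ 2 αl) (hlift : ∀ t : ℝ, α (t : S1) = αl t)
    (x₀ : S1) (t₀ : ℝ) (ht₀ : (t₀ : S1) = x₀)
    (αmin αmax : ℝ)
    (hmin : ∀ ω, αmin ≤ α ω) (hx₀ : α x₀ = αmin)
    (huniq : ∀ ω, α ω = αmin → ω = x₀)
    (hmax : ∀ ω, α ω ≤ αmax) (hmax_att : ∃ ω, α ω = αmax)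
    (h0 : 0 < αmin) (h01 : αmin < αmax) (h1 : αmax < 1) (h32 : αmax < 3 / 2 * αmin)
    (h2nd : 0 < iteratedDeriv 2 αl t₀)
    (X : ℕ → S1 → ℝ)
    (hX0 : ∀ ω, X 0 ω = 1) (hX1 : ∀ ω, X 1 ω = 1 / 2)
    (hXmem : ∀ n, 1 ≤ n → ∀ ω, X (n + 1) ω ∈ Set.Icc (0:ℝ) (1 / 2))
    (hXrec : ∀ n, 1 ≤ n → ∀ ω, Ta (α ω) (X (n + 1) ω) = X n (Fm ω))
 :
    ∃ lam : ℝ, 1 < lam ∧ ∃ a : ℝ, 0 < a ∧ ∃ q : ℕ, ((1:ℝ) / 4) ^ q < 1 / 8 ∧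
      ∀ n : ℕ, 1 ≤ n → ∀ s : ℕ, s < 4 ^ (q + n) →
      ∀ t₁ t₂ x₁ x₂ : ℝ,
        t₁ ∈ Set.Icc ((s : ℝ) / 4 ^ (q + n)) (((s : ℝ) + 1) / 4 ^ (q + n)) →
        t₂ ∈ Set.Icc ((s : ℝ) / 4 ^ (q + n)) (((s : ℝ) + 1) / 4 ^ (q + n)) →
        x₁ ∈ Set.Icc ((1 + X n (Fm (t₁ : S1))) / 2) ((1 + X (n - 1) (Fm (t₁ : S1))) / 2) →
        x₂ ∈ Set.Icc ((1 + X n (Fm (t₂ : S1))) / 2) ((1 + X (n - 1) (Fm (t₂ : S1))) / 2) →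
        lam * (a * |x₁ - x₂| + dist (t₁ : S1) (t₂ : S1)) ≤
          a * |((Tskew α)^[n] ((t₁ : S1), x₁)).2 - ((Tskew α)^[n] ((t₂ : S1), x₂)).2| +
            dist ((Tskew α)^[n] ((t₁ : S1), x₁)).1 ((Tskew α)^[n] ((t₂ : S1), x₂)).1 :=
  stmt8_general α αl hαl hlift αmin hmin h0 X hX0 hX1 hXmem hXrec

end
end

section
/- Let (X, μ) be a probability space and T : X → X a measure-preserving transformation. Let p > 2, let f : X → ℝ be measurable, and suppose there exists C > 0 such that ‖S_n f‖_{L^p(μ)} ≤ C·√n for every n ≥ 1, where S_n f = Σ_{k=0}^{n−1} f ∘ T^k. Define M_n f(x) = max_{1 ≤ k ≤ n} |S_k f(x)|. Then there exists a constant K > 0 such that for every n ≥ 2, ‖M_n f‖_{L^p(μ)} ≤ K·(log n)^{(p−1)/p}·√n. -/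
open MeasureTheory Real
open scoped ENNReal

/-!
Splitting `[1, 2n]` at `n` and using the cocycle identity `S_{n+m} = S_n + S_m ∘ T^n` gives
`M_{2n} ≤ max (M_n, |S_n| + M_n ∘ T^n)`. Since `T^n` preserves `μ` and
`‖max (g, h)‖_p^p ≤ ‖g‖_p^p + ‖h‖_p^p`, this yields `‖M_{2n}‖_p ≤ 2^{1/p} (‖M_n‖_p + C √n)`.
For `p > 2` the factor `2^{1/p}` is smaller than `√2`, so along `n = 2^L` the recursion keeps
`‖M_n‖_p ≤ K √n`. Monotonicity in `n` extends this to all `n`, and it implies the stated bound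
because `log n ≥ log 2`.
-/

noncomputable def birkhoffMax {X : Type*} (T : X → X) (f : X → ℝ) (n : ℕ) (x : X) : ℝ :=
  ⨆ k : Fin n, |birkhoffSum T f (k + 1) x|

section birkhoffMax

variable {X : Type*} (T : X → X) (f : X → ℝ)

theorem birkhoffMax_nonneg (n : ℕ) (x : X) : 0 ≤ birkhoffMax T f n x :=
  Real.iSup_nonneg fun _ => abs_nonneg _

theorem abs_birkhoffSum_le_birkhoffMax {k n : ℕ} (hk : 1 ≤ k) (hkn : k ≤ n) (x : X) :
    |birkhoffSum T f k x| ≤ birkhoffMax T f n x := by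
  obtain ⟨j, rfl⟩ : ∃ j, k = j + 1 := ⟨k - 1, by omega⟩
  exact le_ciSup (f := fun i : Fin n => |birkhoffSum T f (i + 1) x|)
    (Set.finite_range _).bddAbove ⟨j, by omega⟩

theorem birkhoffMax_mono (x : X) : Monotone fun n => birkhoffMax T f n x := fun _ n hmn =>
  Real.iSup_le (fun k => abs_birkhoffSum_le_birkhoffMax T f le_add_self (by omega) x)
    (birkhoffMax_nonneg T f n x)

theorem birkhoffMax_one (x : X) : birkhoffMax T f 1 x = |f x| := by
  simp [birkhoffMax, birkhoffSum_one]

theorem birkhoffMax_two_mul_le (n : ℕ) (x : X) :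
    birkhoffMax T f (2 * n) x ≤
      max (birkhoffMax T f n x) (|birkhoffSum T f n x| + birkhoffMax T f n (T^[n] x)) := by
  refine Real.iSup_le (fun k => ?_) ((birkhoffMax_nonneg T f n x).trans (le_max_left _ _))
  rcases le_or_gt (k.1 + 1) n with hk | hk
  · exact le_max_of_le_left (abs_birkhoffSum_le_birkhoffMax T f le_add_self hk x)
  · obtain ⟨m, hm⟩ : ∃ m, k.1 + 1 = n + m := ⟨k.1 + 1 - n, by omega⟩
    have hk2 := k.2
    calc |birkhoffSum T f (k + 1) x|
        = |birkhoffSum T f n x + birkhoffSum T f m (T^[n] x)| := by rw [hm, birkhoffSum_add]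
      _ ≤ |birkhoffSum T f n x| + |birkhoffSum T f m (T^[n] x)| := abs_add_le _ _
      _ ≤ |birkhoffSum T f n x| + birkhoffMax T f n (T^[n] x) := by
        gcongr
        exact abs_birkhoffSum_le_birkhoffMax T f (by omega) (by omega) _
      _ ≤ _ := le_max_right _ _

variable [MeasurableSpace X]

theorem measurable_birkhoffSum (hT : Measurable T) (hf : Measurable f) (n : ℕ) :
    Measurable (birkhoffSum T f n) :=
  Finset.measurable_sum _ fun k _ => hf.comp (hT.iterate k)

theorem measurable_birkhoffMax (hT : Measurable T) (hf : Measurable f) (n : ℕ) :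
    Measurable (birkhoffMax T f n) :=
  Measurable.iSup fun _ => (measurable_birkhoffSum T f hT hf _).abs

end birkhoffMax

theorem eLpNorm_max_le {X : Type*} [MeasurableSpace X] {μ : Measure X} {p : ℝ≥0∞}
    (hp0 : p ≠ 0) (hp : p ≠ ∞) {g h : X → ℝ} (hg : AEMeasurable g μ) :
    eLpNorm (fun x => max (g x) (h x)) p μ ≤
      2 ^ (1 / p.toReal) * max (eLpNorm g p μ) (eLpNorm h p μ) := by
  have hr : 0 < p.toReal := ENNReal.toReal_pos hp0 hp
  have hpow : ∀ u : X → ℝ, eLpNorm u p μ ^ p.toReal = ∫⁻ x, ‖u x‖ₑ ^ p.toReal ∂μ := fun u => by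
    rw [eLpNorm_eq_lintegral_rpow_enorm_toReal hp0 hp, ← ENNReal.rpow_mul,
      one_div_mul_cancel hr.ne', ENNReal.rpow_one]
  rw [← ENNReal.rpow_le_rpow_iff hr, ENNReal.mul_rpow_of_nonneg _ _ hr.le, ← ENNReal.rpow_mul,
    one_div_mul_cancel hr.ne', ENNReal.rpow_one, two_mul]
  calc eLpNorm (fun x => max (g x) (h x)) p μ ^ p.toReal
      ≤ ∫⁻ x, (‖g x‖ₑ ^ p.toReal + ‖h x‖ₑ ^ p.toReal) ∂μ := by
        rw [hpow]
        refine lintegral_mono fun x => ?_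
        rcases max_choice (g x) (h x) with hx | hx <;> rw [hx]
        exacts [le_self_add, le_add_self]
    _ = eLpNorm g p μ ^ p.toReal + eLpNorm h p μ ^ p.toReal := by
        rw [lintegral_add_left' (hg.enorm.pow_const _), hpow, hpow]
    _ ≤ _ := by
        gcongr
        exacts [le_max_left _ _, le_max_right _ _]

theorem eLpNorm_birkhoffMax_two_mul_le {X : Type*} [MeasurableSpace X] {μ : Measure X}
    {T : X → X} (hT : MeasurePreserving T μ μ) {f : X → ℝ} (hf : Measurable f) {p : ℝ≥0∞}
    (hp1 : 1 ≤ p) (hp : p ≠ ∞) (n : ℕ) :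
    eLpNorm (birkhoffMax T f (2 * n)) p μ ≤
      2 ^ (1 / p.toReal) *
        (eLpNorm (birkhoffMax T f n) p μ + eLpNorm (birkhoffSum T f n) p μ) := by
  have hM := measurable_birkhoffMax T f hT.measurable hf n
  have hS := measurable_birkhoffSum T f hT.measurable hf n
  have hshift : eLpNorm (fun x => |birkhoffSum T f n x| + birkhoffMax T f n (T^[n] x)) p μ ≤
      eLpNorm (birkhoffMax T f n) p μ + eLpNorm (birkhoffSum T f n) p μ := by
    calc _ ≤ eLpNorm (fun x => |birkhoffSum T f n x|) p μ +
          eLpNorm (fun x => birkhoffMax T f n (T^[n] x)) p μ :=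
          eLpNorm_add_le hS.abs.aestronglyMeasurable
            (hM.comp (hT.iterate n).measurable).aestronglyMeasurable hp1
      _ = _ := by
          rw [add_comm, ← eLpNorm_comp_measurePreserving hM.aestronglyMeasurable (hT.iterate n)]
          simp only [← Real.norm_eq_abs, eLpNorm_norm]
          rfl
  calc eLpNorm (birkhoffMax T f (2 * n)) p μ
      ≤ eLpNorm (fun x => max (birkhoffMax T f n x)
          (|birkhoffSum T f n x| + birkhoffMax T f n (T^[n] x))) p μ :=
        eLpNorm_mono_real fun x => by
          rw [Real.norm_of_nonneg (birkhoffMax_nonneg T f _ x)]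
          exact birkhoffMax_two_mul_le T f n x
    _ ≤ _ := eLpNorm_max_le (by positivity) hp hM.aemeasurable
    _ ≤ _ := by
        gcongr
        exact max_le le_self_add hshift

section eLpNorm

variable {X : Type*} [MeasurableSpace X] {μ : Measure X} (T : X → X) (f : X → ℝ) {p : ℝ≥0∞}

theorem monotone_eLpNorm_birkhoffMax : Monotone fun n => eLpNorm (birkhoffMax T f n) p μ :=
  fun m _ hmn => eLpNorm_mono_real fun x => by
    rw [Real.norm_of_nonneg (birkhoffMax_nonneg T f m x)]
    exact birkhoffMax_mono T f x hmn

theorem eLpNorm_birkhoffMax_one : eLpNorm (birkhoffMax T f 1) p μ = eLpNorm f p μ := by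
  simp only [funext (birkhoffMax_one T f), ← Real.norm_eq_abs, eLpNorm_norm]

end eLpNorm

theorem le_mul_sqrt_two_pow_of_le_two_mul {a : ℕ → ℝ≥0∞} {θ c K : ℝ} (hθ : 0 ≤ θ) (hc : 0 ≤ c)
    (hcK : c ≤ K) (hK : θ * (K + c) ≤ √2 * K) (h1 : a 1 ≤ ENNReal.ofReal c)
    (hrec : ∀ n, a (2 * n) ≤ ENNReal.ofReal θ * (a n + ENNReal.ofReal (c * √n))) (L : ℕ) :
    a (2 ^ L) ≤ ENNReal.ofReal (K * √(2 ^ L)) := by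
  induction L with
  | zero => simpa using h1.trans (ENNReal.ofReal_le_ofReal hcK)
  | succ L ih =>
    have hK0 : 0 ≤ K := hc.trans hcK
    calc a (2 ^ (L + 1)) = a (2 * 2 ^ L) := by rw [pow_succ']
      _ ≤ ENNReal.ofReal θ * (ENNReal.ofReal (K * √(2 ^ L)) + ENNReal.ofReal (c * √(2 ^ L))) := by
        refine (hrec _).trans ?_
        push_cast
        gcongr
      _ = ENNReal.ofReal (θ * (K + c) * √(2 ^ L)) := by
        rw [← ENNReal.ofReal_add (by positivity) (by positivity), ← ENNReal.ofReal_mul hθ]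
        ring_nf
      _ ≤ ENNReal.ofReal (K * √(2 ^ (L + 1))) := by
        rw [pow_succ', Real.sqrt_mul zero_le_two, ← mul_assoc, mul_comm K]
        gcongr

theorem le_mul_sqrt_of_le_mul_sqrt_two_pow {a : ℕ → ℝ≥0∞} (ha : Monotone a) {K : ℝ}
    (hK : 0 ≤ K) (hpow : ∀ L, a (2 ^ L) ≤ ENNReal.ofReal (K * √(2 ^ L))) {n : ℕ} (hn : n ≠ 0) :
    a n ≤ ENNReal.ofReal (K * √2 * √n) := by
  set L := Nat.log 2 n + 1
  have hnL : n ≤ 2 ^ L := (Nat.lt_pow_succ_log_self one_lt_two n).le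
  have hLn : 2 ^ L ≤ 2 * n := by
    rw [pow_succ']
    exact Nat.mul_le_mul_left 2 (Nat.pow_log_le_self 2 hn)
  calc a n ≤ a (2 ^ L) := ha hnL
    _ ≤ ENNReal.ofReal (K * √(2 ^ L)) := hpow L
    _ ≤ ENNReal.ofReal (K * √2 * √n) := by
      rw [mul_assoc, ← Real.sqrt_mul zero_le_two]
      gcongr
      exact_mod_cast hLn

theorem exists_le_mul_sqrt_of_le_two_mul {a : ℕ → ℝ≥0∞} (ha : Monotone a) {θ c : ℝ}
    (hθ0 : 0 ≤ θ) (hθ : θ < √2) (hc : 0 < c) (h1 : a 1 ≤ ENNReal.ofReal c)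
    (hrec : ∀ n, a (2 * n) ≤ ENNReal.ofReal θ * (a n + ENNReal.ofReal (c * √n))) :
    ∃ K, 0 < K ∧ ∀ n, n ≠ 0 → a n ≤ ENNReal.ofReal (K * √n) := by
  set K := √2 * c / (√2 - θ)
  have hKθ : K * (√2 - θ) = √2 * c := div_mul_cancel₀ _ (by linarith)
  have hK : 0 < K := div_pos (by positivity) (by linarith)
  have hcK : c ≤ K := le_of_mul_le_mul_right (by nlinarith) (by linarith : 0 < √2 - θ)
  have hKrec : θ * (K + c) ≤ √2 * K := by nlinarith
  exact ⟨K * √2, by positivity, fun n hn => le_mul_sqrt_of_le_mul_sqrt_two_pow ha hK.le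
    (le_mul_sqrt_two_pow_of_le_two_mul hθ0 hc.le hcK hKrec h1 hrec) hn⟩

theorem le_div_rpow_log_two_mul_rpow_log {K e x : ℝ} (hK : 0 ≤ K) (he : 0 ≤ e) (hx : 2 ≤ x) :
    K ≤ K / log 2 ^ e * log x ^ e := by
  have hlog2 : 0 < log 2 := log_pos one_lt_two
  have hlog : log 2 ^ e ≤ log x ^ e :=
    Real.rpow_le_rpow hlog2.le (log_le_log two_pos hx) he
  rw [div_mul_eq_mul_div, le_div_iff₀ (by positivity)]
  exact mul_le_mul_of_nonneg_left hlog hK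

theorem stmt19_general {X : Type*} [MeasurableSpace X] (μ : Measure X)
    (T : X → X) (hT : MeasurePreserving T μ μ)
    (p : ℝ) (hp : 2 < p) (f : X → ℝ) (hf : Measurable f) (C : ℝ) (hC : 0 < C)
    (hbound : ∀ n : ℕ, 1 ≤ n →
      eLpNorm (fun x => ∑ k ∈ Finset.range n, f (T^[k] x)) (ENNReal.ofReal p) μ ≤
        ENNReal.ofReal (C * Real.sqrt n)) :
    ∃ K : ℝ, 0 < K ∧ ∀ n : ℕ, 2 ≤ n →
      eLpNorm (fun x => ⨆ k : Fin n, |∑ j ∈ Finset.range (k.1 + 1), f (T^[j] x)|)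
          (ENNReal.ofReal p) μ ≤
        ENNReal.ofReal (K * (Real.log n) ^ ((p - 1) / p) * Real.sqrt n) := by
  have hp0 : 0 < p := by linarith
  have hS : ∀ n, eLpNorm (birkhoffSum T f n) (ENNReal.ofReal p) μ ≤ ENNReal.ofReal (C * √n) := by
    rintro (_ | n)
    · simp [birkhoffSum_zero']
    · exact hbound _ n.succ_pos
  have hθ : (2 : ℝ) ^ (1 / p) < √2 := by
    rw [Real.sqrt_eq_rpow]
    exact Real.rpow_lt_rpow_of_exponent_lt one_lt_two (one_div_lt_one_div_of_lt two_pos hp)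
  obtain ⟨K, hK, hMK⟩ := exists_le_mul_sqrt_of_le_two_mul (monotone_eLpNorm_birkhoffMax T f)
    (by positivity) hθ hC ((eLpNorm_birkhoffMax_one T f).trans_le (by simpa using hS 1))
    fun n => by
      refine (eLpNorm_birkhoffMax_two_mul_le hT hf (ENNReal.one_le_ofReal.mpr (by linarith))
        ENNReal.ofReal_ne_top n).trans ?_
      rw [ENNReal.toReal_ofReal hp0.le, ← ENNReal.ofReal_ofNat 2,
        ENNReal.ofReal_rpow_of_pos two_pos]
      gcongr
      exact hS n
  refine ⟨K / log 2 ^ ((p - 1) / p), by have := log_pos one_lt_two; positivity, fun n hn => ?_⟩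
  refine (hMK n (by omega)).trans (ENNReal.ofReal_le_ofReal ?_)
  gcongr
  exact le_div_rpow_log_two_mul_rpow_log hK.le (div_nonneg (by linarith) hp0.le)
    (by exact_mod_cast hn)

/-- Maximal inequality: if `‖S_n f‖_p ≤ C √n` for all `n ≥ 1` (with `p > 2`), then the maximal
function `M_n f = max_{1 ≤ k ≤ n} |S_k f|` satisfies `‖M_n f‖_p ≤ K (log n)^{(p-1)/p} √n`. -/
theorem stmt19 {X : Type*} [MeasurableSpace X] (μ : Measure X) [IsProbabilityMeasure μ]
    (T : X → X) (hT : MeasurePreserving T μ μ)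
    (p : ℝ) (hp : 2 < p) (f : X → ℝ) (hf : Measurable f) (C : ℝ) (hC : 0 < C)
    (hbound : ∀ n : ℕ, 1 ≤ n →
      eLpNorm (fun x => ∑ k ∈ Finset.range n, f (T^[k] x)) (ENNReal.ofReal p) μ ≤
        ENNReal.ofReal (C * Real.sqrt n)) :
    ∃ K : ℝ, 0 < K ∧ ∀ n : ℕ, 2 ≤ n →
      eLpNorm (fun x => ⨆ k : Fin n, |∑ j ∈ Finset.range (k.1 + 1), f (T^[j] x)|)
          (ENNReal.ofReal p) μ ≤
        ENNReal.ofReal (K * (Real.log n) ^ ((p - 1) / p) * Real.sqrt n) :=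
  stmt19_general μ T hT p hp f hf C hC hbound
end
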